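/- arXiv:1105.1908 — 5 statements merged into one kernel-verified Lean document; each statement's English description precedes it below -/
import Mathlib

section
/- Let M ≥ 12 be an integer and let G be a graph with an edge e = uv such that d_G(u) ≤ ⌊(M+2)/4⌋ and d_G(u) + d_G(v) ≤ M + 1. If G − e admits a (2,1)-total labelling with colors {0,1,...,M+2}, then so does G. -/
/-! Erase the colour of `u`. The edge `uv` must avoid the colours of the other
`(d(u) - 1) + (d(v) - 1)` edges at `u` and `v` and the three colours within distance one of the
colour of `v`, so at most `d(u) + d(v) + 1 ≤ M + 2` colours are forbidden. Afterwards `u` must avoid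
the colours of its `d(u)` neighbours and the three colours within distance one of each of its
`d(u)` edges, at most `4 d(u) ≤ M + 2` colours. The palette `{0, …, M + 2}` has `M + 3` colours,
so both choices are possible. -/

open SimpleGraph Finset

/-- `cv`, `ce` form a `k`-(d,1)-total labelling of `G`: vertex colors and edge colors lie in
`{0,…,k}`, adjacent vertices get distinct colors, adjacent edges get distinct colors, and a
vertex's color differs by at least `d` from the color of each incident edge. -/
def IsDTotalLabelling {V : Type*} (G : SimpleGraph V) (d k : ℕ)
    (cv : V → ℕ) (ce : Sym2 V → ℕ) : Prop :=
  (∀ v, cv v ≤ k) ∧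
  (∀ e ∈ G.edgeSet, ce e ≤ k) ∧
  (∀ u v, G.Adj u v → cv u ≠ cv v) ∧
  (∀ e ∈ G.edgeSet, ∀ e' ∈ G.edgeSet, e ≠ e' → (∃ w, w ∈ e ∧ w ∈ e') → ce e ≠ ce e') ∧
  (∀ u, ∀ e ∈ G.edgeSet, u ∈ e → (d : ℤ) ≤ |(cv u : ℤ) - (ce e : ℤ)|)

/-- `G` admits a `k`-(d,1)-total labelling. -/
def HasDTotalLabelling {V : Type*} (G : SimpleGraph V) (d k : ℕ) : Prop :=
  ∃ cv ce, IsDTotalLabelling G d k cv ce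

/-- The (d,1)-total labelling number `λ_d^T(G)`. -/
noncomputable def lambdaT {V : Type*} (G : SimpleGraph V) (d : ℕ) : ℕ :=
  sInf {k | HasDTotalLabelling G d k}

theorem exists_le_notMem_of_card_le {k : ℕ} (F : Finset ℕ) (hF : #F ≤ k) : ∃ x ≤ k, x ∉ F := by
  obtain ⟨x, hx, hxF⟩ := exists_mem_notMem_of_card_lt_card (s := F) (t := range (k + 1))
    (by rw [card_range]; omega)
  exact ⟨x, Nat.lt_succ_iff.mp (mem_range.mp hx), hxF⟩

theorem card_Icc_sub_one_add_one_le (c : ℕ) : #(Icc (c - 1) (c + 1)) ≤ 3 := by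
  rw [Nat.card_Icc]
  omega

theorem two_le_abs_sub_of_notMem_Icc {x c : ℕ} (h : x ∉ Icc (c - 1) (c + 1)) :
    (2 : ℤ) ≤ |(x : ℤ) - c| := by
  rw [mem_Icc] at h
  rw [le_abs]
  omega

section Extension

variable {V : Type*} {G : SimpleGraph V} {u v : V} {d k : ℕ} {cv : V → ℕ} {ce : Sym2 V → ℕ}
  {a b : ℕ}

theorem IsDTotalLabelling.of_deleteEdges [DecidableEq V]
    (hlab : IsDTotalLabelling (G.deleteEdges {s(u, v)}) d k cv ce) (ha : a ≤ k) (hb : b ≤ k)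
    (ha_edge : ∀ f ∈ G.edgeSet, f ≠ s(u, v) → (u ∈ f ∨ v ∈ f) → ce f ≠ a)
    (ha_v : (d : ℤ) ≤ |(cv v : ℤ) - a|)
    (hb_adj : ∀ w, G.Adj u w → cv w ≠ b)
    (hb_inc : ∀ f ∈ G.edgeSet, u ∈ f →
      (d : ℤ) ≤ |(b : ℤ) - (Function.update ce s(u, v) a f : ℕ)|) :
    IsDTotalLabelling G d k (Function.update cv u b) (Function.update ce s(u, v) a) := by
  obtain ⟨hcv, hce, hvv, hee, hve⟩ := hlab
  have hmem : ∀ {f}, f ∈ G.edgeSet → f ≠ s(u, v) → f ∈ (G.deleteEdges {s(u, v)}).edgeSet :=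
    fun hf hne => by simpa [edgeSet_deleteEdges] using ⟨hf, hne⟩
  have ha_share : ∀ g ∈ G.edgeSet, g ≠ s(u, v) → (∃ w, w ∈ s(u, v) ∧ w ∈ g) → ce g ≠ a := by
    rintro g hg hne ⟨w, hw, hwg⟩
    refine ha_edge g hg hne ?_
    rcases Sym2.mem_iff.mp hw with rfl | rfl <;> simp [hwg]
  refine ⟨fun w => ?_, fun f hf => ?_, fun x y hxy => ?_, fun f hf g hg hfg hshare => ?_,
    fun w f hf hwf => ?_⟩
  · rcases eq_or_ne w u with rfl | hw
    · simpa using hb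
    · simpa [hw] using hcv w
  · rcases eq_or_ne f s(u, v) with rfl | hf'
    · simpa using ha
    · simpa [hf'] using hce f (hmem hf hf')
  · rcases eq_or_ne x u with rfl | hx
    · simpa [hxy.ne'] using (hb_adj y hxy).symm
    rcases eq_or_ne y u with rfl | hy
    · simpa [hx] using hb_adj x hxy.symm
    have hne : s(x, y) ≠ s(u, v) := by simp [hx, hy]
    simpa [hx, hy] using hvv x y ((deleteEdges_adj ..).mpr ⟨hxy, hne⟩)
  · rcases eq_or_ne f s(u, v) with rfl | hf'
    · have hg' : g ≠ s(u, v) := hfg.symm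
      simpa [hg'] using (ha_share g hg hg' hshare).symm
    rcases eq_or_ne g s(u, v) with rfl | hg'
    · obtain ⟨w, hwf, hwg⟩ := hshare
      simpa [hf'] using ha_share f hf hf' ⟨w, hwg, hwf⟩
    simpa [hf', hg'] using hee f (hmem hf hf') g (hmem hg hg') hfg hshare
  · rcases eq_or_ne w u with rfl | hw
    · simpa using hb_inc f hf hwf
    rcases eq_or_ne f s(u, v) with rfl | hf'
    · obtain rfl : w = v := by simpa [hw] using hwf
      simpa [hw] using ha_v
    simpa [hw, hf'] using hve w f (hmem hf hf') hwf

end Extension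

section Counting

variable {V : Type*} {G : SimpleGraph V} [Fintype V] [DecidableRel G.Adj] {k : ℕ}

theorem exists_color_for_edge [DecidableEq V] {u v : V} (ce : Sym2 V → ℕ) (c : ℕ)
    (huv : G.Adj u v) (hdeg : G.degree u + G.degree v + 1 ≤ k) :
    ∃ a ≤ k, (∀ f ∈ G.edgeSet, f ≠ s(u, v) → (u ∈ f ∨ v ∈ f) → ce f ≠ a) ∧
      (2 : ℤ) ≤ |(c : ℤ) - a| := by
  set E := (G.incidenceFinset u).erase s(u, v) ∪ (G.incidenceFinset v).erase s(u, v)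
  have hE : #E ≤ (G.degree u - 1) + (G.degree v - 1) := by
    refine (card_union_le _ _).trans (add_le_add ?_ ?_) <;>
      rw [card_erase_of_mem (by simpa [incidenceSet] using huv), card_incidenceFinset_eq_degree]
  have hdu : 0 < G.degree u := G.degree_pos_iff_exists_adj u |>.mpr ⟨v, huv⟩
  have hdv : 0 < G.degree v := G.degree_pos_iff_exists_adj v |>.mpr ⟨u, huv.symm⟩
  obtain ⟨a, ha, haF⟩ := exists_le_notMem_of_card_le (E.image ce ∪ Icc (c - 1) (c + 1)) <| calc
    #(E.image ce ∪ Icc (c - 1) (c + 1)) ≤ #E + 3 :=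
      (card_union_le _ _).trans (add_le_add card_image_le (card_Icc_sub_one_add_one_le c))
    _ ≤ k := by omega
  rw [mem_union, not_or] at haF
  refine ⟨a, ha, fun f hf hne hf_inc hfa => haF.1 ?_, ?_⟩
  · refine mem_image.mpr ⟨f, ?_, hfa⟩
    rcases hf_inc with h | h <;> simp [E, incidenceSet, hf, hne, h]
  · rw [abs_sub_comm]
    exact two_le_abs_sub_of_notMem_Icc haF.2

theorem exists_color_for_vertex [DecidableEq V] (cv : V → ℕ) (ce : Sym2 V → ℕ) (u : V)
    (hdeg : 4 * G.degree u ≤ k) :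
    ∃ b ≤ k, (∀ w, G.Adj u w → cv w ≠ b) ∧ ∀ f ∈ G.edgeSet, u ∈ f → (2 : ℤ) ≤ |(b : ℤ) - ce f| := by
  set F := (G.neighborFinset u).image cv ∪
    (G.incidenceFinset u).biUnion fun f => Icc (ce f - 1) (ce f + 1)
  obtain ⟨b, hb, hbF⟩ := exists_le_notMem_of_card_le F <| calc
    #F ≤ G.degree u + G.degree u * 3 := by
      refine (card_union_le _ _).trans (add_le_add ?_ ?_)
      · exact card_image_le.trans (card_neighborFinset_eq_degree G u).le
      · rw [← card_incidenceFinset_eq_degree]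
        exact card_biUnion_le_card_mul _ _ _ fun f _ => card_Icc_sub_one_add_one_le (ce f)
    _ ≤ k := by omega
  simp only [F, mem_union, not_or, mem_biUnion, not_exists, not_and] at hbF
  refine ⟨b, hb, fun w hw hwb => hbF.1 ?_, fun f hf huf => ?_⟩
  · exact mem_image.mpr ⟨w, (mem_neighborFinset G u w).mpr hw, hwb⟩
  · exact two_le_abs_sub_of_notMem_Icc (hbF.2 f (by simpa [incidenceSet] using ⟨hf, huf⟩))

end Counting

theorem stmt5_general {V : Type*} [Fintype V] (G : SimpleGraph V) [DecidableRel G.Adj]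
    (M : ℕ) (u v : V) (huv : G.Adj u v)
    (hdu : G.degree u ≤ (M + 2) / 4)
    (hdeg : G.degree u + G.degree v ≤ M + 1)
    (hH : HasDTotalLabelling (G.deleteEdges {s(u, v)}) 2 (M + 2)) :
    HasDTotalLabelling G 2 (M + 2) := by
  classical
  obtain ⟨cv, ce, hlab⟩ := hH
  obtain ⟨a, ha, ha_edge, ha_v⟩ :=
    exists_color_for_edge (k := M + 2) ce (cv v) huv (by omega)
  obtain ⟨b, hb, hb_adj, hb_inc⟩ :=
    exists_color_for_vertex (G := G) (k := M + 2) cv (Function.update ce s(u, v) a) u (by omega)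
  exact ⟨_, _, hlab.of_deleteEdges ha hb ha_edge ha_v hb_adj hb_inc⟩

theorem stmt5 {V : Type*} [Fintype V] (G : SimpleGraph V) [DecidableRel G.Adj]
    (M : ℕ) (hM : 12 ≤ M) (u v : V) (huv : G.Adj u v)
    (hdu : G.degree u ≤ (M + 2) / 4)
    (hdeg : G.degree u + G.degree v ≤ M + 1)
    (hH : HasDTotalLabelling (G.deleteEdges {s(u, v)}) 2 (M + 2)) :
    HasDTotalLabelling G 2 (M + 2) :=
  stmt5_general G M u v huv hdu hdeg hH
end

section
/- Let G be a minimal (with respect to |V| + |E|) planar graph with maximum degree at most M (M ≥ 12) admitting no (2,1)-total labelling with colors {0,...,M+2}. Then for every edge uv with min{d(u), d(v)} ≤ ⌊(M+2)/4⌋, one has d(u) + d(v) ≥ M + 2. -/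
open SimpleGraph Finset

/-- `H` is a minor of `G`: there are pairwise disjoint nonempty branch sets, each inducing a
connected subgraph of `G`, such that adjacency in `H` is witnessed by an edge of `G` between
the corresponding branch sets. -/
def IsMinorOf {α β : Type*} (H : SimpleGraph α) (G : SimpleGraph β) : Prop :=
  ∃ B : α → Set β, (∀ a, (B a).Nonempty) ∧ (Pairwise fun a a' => Disjoint (B a) (B a')) ∧
    (∀ a, (G.induce (B a)).Connected) ∧
    (∀ a a', H.Adj a a' → ∃ x ∈ B a, ∃ y ∈ B a', G.Adj x y)

/-- Planarity, via Wagner's theorem: no `K₅` and no `K₃,₃` minor. -/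
def IsPlanarGraph {V : Type*} (G : SimpleGraph V) : Prop :=
  ¬ IsMinorOf (completeGraph (Fin 5)) G ∧
  ¬ IsMinorOf (completeBipartiteGraph (Fin 3) (Fin 3)) G

lemma absLem (a c : ℕ) (h : a ∉ Finset.Icc (c - 1) (c + 1)) :
    (2 : ℤ) ≤ |(c : ℤ) - (a : ℤ)| := by
  simp only [Finset.mem_Icc, not_and, not_le] at h
  rw [le_abs]
  omega

lemma key {V : Type*} [Fintype V] (G : SimpleGraph V) [DecidableRel G.Adj]
    (M : ℕ)
    (hno : ¬ HasDTotalLabelling G 2 (M + 2))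
    (hmin : ∀ H : SimpleGraph V, H < G → HasDTotalLabelling H 2 (M + 2))
    (u v : V) (hadj : G.Adj u v)
    (hdu : G.degree u ≤ (M + 2) / 4)
    (hsum : G.degree u + G.degree v ≤ M + 1) : False := by
  classical
  set G' := G.deleteEdges {s(u, v)} with hG'
  have hlt : G' < G := by
    refine lt_of_le_of_ne (SimpleGraph.deleteEdges_le _) fun h => ?_
    have : G'.Adj u v := h ▸ hadj
    rw [hG', SimpleGraph.deleteEdges_adj] at this
    exact this.2 rfl
  obtain ⟨cv, ce, hcv_le, hce_le, hvv, hee, hve⟩ := hmin G' hlt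
  have hedge' : ∀ e, e ∈ G'.edgeSet ↔ e ∈ G.edgeSet ∧ e ≠ s(u, v) := by
    intro e
    rw [hG', SimpleGraph.edgeSet_deleteEdges]
    simp [Set.mem_diff]
  have hne : u ≠ v := hadj.ne
  have huvEU : s(u, v) ∈ G.incidenceFinset u := by
    rw [SimpleGraph.mem_incidenceFinset]
    exact (G.mem_incidenceSet u v).2 hadj
  have huvEV : s(u, v) ∈ G.incidenceFinset v := by
    rw [SimpleGraph.mem_incidenceFinset, Sym2.eq_swap]
    exact (G.mem_incidenceSet v u).2 hadj.symm
  have hmemEU : ∀ e ∈ G.edgeSet, u ∈ e → e ∈ G.incidenceFinset u := fun e he hu => by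
    rw [SimpleGraph.mem_incidenceFinset]; exact ⟨he, hu⟩
  have hmemEV : ∀ e ∈ G.edgeSet, v ∈ e → e ∈ G.incidenceFinset v := fun e he hv => by
    rw [SimpleGraph.mem_incidenceFinset]; exact ⟨he, hv⟩
  -- choose α for the edge uv
  set A : Finset ℕ :=
    ((G.incidenceFinset u ∪ G.incidenceFinset v).erase s(u, v)).image ce ∪
      Finset.Icc (cv v - 1) (cv v + 1) with hA
  have hAcard : A.card < (Finset.Icc 0 (M + 2)).card := by
    have h1 : (((G.incidenceFinset u ∪ G.incidenceFinset v).erase s(u, v)).image ce).card ≤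
        (G.degree u - 1) + (G.degree v - 1) := by
      calc _ ≤ ((G.incidenceFinset u ∪ G.incidenceFinset v).erase s(u, v)).card :=
              Finset.card_image_le
        _ = ((G.incidenceFinset u).erase s(u, v) ∪ (G.incidenceFinset v).erase s(u, v)).card := by
              rw [Finset.erase_union_distrib]
        _ ≤ ((G.incidenceFinset u).erase s(u, v)).card +
              ((G.incidenceFinset v).erase s(u, v)).card := Finset.card_union_le _ _
        _ = (G.degree u - 1) + (G.degree v - 1) := by
              rw [Finset.card_erase_of_mem huvEU, Finset.card_erase_of_mem huvEV,
                G.card_incidenceFinset_eq_degree, G.card_incidenceFinset_eq_degree]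
    have h2 := Finset.card_union_le
      (((G.incidenceFinset u ∪ G.incidenceFinset v).erase s(u, v)).image ce)
      (Finset.Icc (cv v - 1) (cv v + 1))
    rw [← hA] at h2
    have h3 : (Finset.Icc (cv v - 1) (cv v + 1)).card ≤ 3 := by rw [Nat.card_Icc]; omega
    have hdeg1 : 1 ≤ G.degree u := by
      rw [← SimpleGraph.card_incidenceFinset_eq_degree]
      exact Finset.card_pos.2 ⟨_, huvEU⟩
    rw [Nat.card_Icc]
    omega
  obtain ⟨α, hαmem, hαA⟩ : ∃ x ∈ Finset.Icc 0 (M + 2), x ∉ A := by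
    by_contra hc
    push_neg at hc
    exact absurd (Finset.card_le_card hc) (by omega)
  set ce' : Sym2 V → ℕ := fun e => if e = s(u, v) then α else ce e with hce'
  -- choose β as the new color of u
  set B : Finset ℕ :=
    (G.neighborFinset u).image cv ∪
      (G.incidenceFinset u).biUnion (fun e => Finset.Icc (ce' e - 1) (ce' e + 1)) with hB
  have hBcard : B.card < (Finset.Icc 0 (M + 2)).card := by
    have h1 : ((G.neighborFinset u).image cv).card ≤ G.degree u := by
      rw [← SimpleGraph.card_neighborFinset_eq_degree]
      exact Finset.card_image_le
    have h2 : ((G.incidenceFinset u).biUnion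
        (fun e => Finset.Icc (ce' e - 1) (ce' e + 1))).card ≤ 3 * G.degree u := by
      calc _ ≤ ∑ e ∈ G.incidenceFinset u, (Finset.Icc (ce' e - 1) (ce' e + 1)).card :=
              Finset.card_biUnion_le
        _ ≤ ∑ e ∈ G.incidenceFinset u, 3 :=
              Finset.sum_le_sum fun e _ => by rw [Nat.card_Icc]; omega
        _ = 3 * G.degree u := by
              rw [Finset.sum_const, G.card_incidenceFinset_eq_degree]; ring
    have h3 := Finset.card_union_le ((G.neighborFinset u).image cv)
      ((G.incidenceFinset u).biUnion (fun e => Finset.Icc (ce' e - 1) (ce' e + 1)))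
    rw [← hB] at h3
    have h4 : G.degree u * 4 ≤ M + 2 := (Nat.le_div_iff_mul_le (by norm_num)).1 hdu
    rw [Nat.card_Icc]
    omega
  obtain ⟨β, hβmem, hβB⟩ : ∃ x ∈ Finset.Icc 0 (M + 2), x ∉ B := by
    by_contra hc
    push_neg at hc
    exact absurd (Finset.card_le_card hc) (by omega)
  set cv' : V → ℕ := fun w => if w = u then β else cv w with hcv'
  -- facts about α and β
  have hβnbr : ∀ w ∈ G.neighborFinset u, β ≠ cv w := by
    intro w hw hcontra
    exact hβB (Finset.mem_union_left _ (Finset.mem_image.2 ⟨w, hw, hcontra.symm⟩))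
  have hβedge : ∀ e ∈ G.incidenceFinset u, (2 : ℤ) ≤ |(β : ℤ) - (ce' e : ℤ)| := by
    intro e he
    rw [abs_sub_comm]
    refine absLem β (ce' e) fun hc => hβB (Finset.mem_union_right _ ?_)
    exact Finset.mem_biUnion.2 ⟨e, he, hc⟩
  have hαedge : ∀ e ∈ (G.incidenceFinset u ∪ G.incidenceFinset v).erase s(u, v), α ≠ ce e := by
    intro e he hcontra
    exact hαA (Finset.mem_union_left _ (Finset.mem_image.2 ⟨e, he, hcontra.symm⟩))
  have hαv : (2 : ℤ) ≤ |(cv v : ℤ) - (α : ℤ)| :=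
    absLem α (cv v) fun hc => hαA (Finset.mem_union_right _ hc)
  -- construct the labelling of G
  refine hno ⟨cv', ce', fun w => ?_, fun e he => ?_, fun a b hab => ?_,
    fun e he e' he' hne' ⟨w, hwe, hwe'⟩ => ?_, fun w e he hwe => ?_⟩
  · rw [hcv']
    dsimp only
    split
    · exact (Finset.mem_Icc.1 hβmem).2
    · exact hcv_le w
  · rw [hce']
    dsimp only
    split
    · exact (Finset.mem_Icc.1 hαmem).2
    · next h => exact hce_le e ((hedge' e).2 ⟨he, h⟩)
  · -- adjacent vertices
    rw [hcv']
    dsimp only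
    by_cases ha : a = u <;> by_cases hb : b = u
    · exact absurd (ha ▸ hb ▸ hab) (G.irrefl)
    · rw [if_pos ha, if_neg hb]
      exact hβnbr b (by rw [SimpleGraph.mem_neighborFinset]; exact ha ▸ hab)
    · rw [if_neg ha, if_pos hb]
      exact fun hc => hβnbr a (by rw [SimpleGraph.mem_neighborFinset]; exact hb ▸ hab.symm) hc.symm
    · rw [if_neg ha, if_neg hb]
      refine hvv a b ?_
      rw [hG', SimpleGraph.deleteEdges_adj]
      refine ⟨hab, fun hc => ?_⟩
      rw [Set.mem_singleton_iff, Sym2.eq_iff] at hc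
      rcases hc with ⟨h1, h2⟩ | ⟨h1, h2⟩
      · exact ha h1
      · exact hb h2
  · -- adjacent edges
    rw [hce']
    dsimp only
    by_cases h1 : e = s(u, v) <;> by_cases h2 : e' = s(u, v)
    · exact absurd (h1.trans h2.symm) hne'
    · rw [if_pos h1, if_neg h2]
      refine hαedge e' (Finset.mem_erase.2 ⟨h2, ?_⟩)
      rw [h1, Sym2.mem_iff] at hwe
      rcases hwe with rfl | rfl
      · exact Finset.mem_union_left _ (hmemEU e' he' hwe')
      · exact Finset.mem_union_right _ (hmemEV e' he' hwe')
    · rw [if_neg h1, if_pos h2]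
      refine fun hc => hαedge e (Finset.mem_erase.2 ⟨h1, ?_⟩) hc.symm
      rw [h2, Sym2.mem_iff] at hwe'
      rcases hwe' with rfl | rfl
      · exact Finset.mem_union_left _ (hmemEU e he hwe)
      · exact Finset.mem_union_right _ (hmemEV e he hwe)
    · rw [if_neg h1, if_neg h2]
      exact hee e ((hedge' e).2 ⟨he, h1⟩) e' ((hedge' e').2 ⟨he', h2⟩) hne' ⟨w, hwe, hwe'⟩
  · -- vertex-edge
    rw [hcv']
    dsimp only
    by_cases h1 : e = s(u, v)
    · rw [h1, Sym2.mem_iff] at hwe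
      rcases hwe with h | h
      · rw [if_pos h, h1]
        have := hβedge s(u, v) huvEU
        simpa [hce'] using this
      · have hwne : w ≠ u := by rw [h]; exact fun hc => hne hc.symm
        rw [if_neg hwne, h1]
        have hcea : ce' s(u, v) = α := by rw [hce']; simp
        rw [hcea, h]
        exact hαv
    · by_cases h2 : w = u
      · rw [if_pos h2]
        have heEU : e ∈ G.incidenceFinset u := hmemEU e he (h2 ▸ hwe)
        have := hβedge e heEU
        rw [abs_sub_comm] at this
        rw [abs_sub_comm]
        exact this
      · rw [if_neg h2]
        have : ce' e = ce e := by rw [hce']; simp [h1]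
        rw [this]
        exact hve w e ((hedge' e).2 ⟨he, h1⟩) hwe

theorem stmt9 {V : Type*} [Fintype V] (G : SimpleGraph V) [DecidableRel G.Adj]
    (M : ℕ) (hM : 12 ≤ M)
    (hplanar : IsPlanarGraph G)
    (hΔ : G.maxDegree ≤ M)
    (hno : ¬ HasDTotalLabelling G 2 (M + 2))
    (hmin : ∀ H : SimpleGraph V, H < G → HasDTotalLabelling H 2 (M + 2)) :
    ∀ u v, G.Adj u v → min (G.degree u) (G.degree v) ≤ (M + 2) / 4 →
      M + 2 ≤ G.degree u + G.degree v := by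
  intro u v huv hminle
  by_contra h
  push_neg at h
  rcases min_le_iff.1 hminle with hle | hle
  · exact key G M hno hmin u v huv hle (by omega)
  · exact key G M hno hmin v u huv.symm hle (by omega)
end

section
/- Let G be a minimal (with respect to |V| + |E|) planar graph with maximum degree at most M (M ≥ 12) admitting no (2,1)-total labelling with colors {0,...,M+2}. Then every 4-vertex of G is adjacent only to vertices of degree at least 8. -/
open SimpleGraph Finset

def Iset (c : ℕ) : Finset ℕ := {c - 1, c, c + 1}

lemma Iset_card (c : ℕ) : (Iset c).card ≤ 3 := by
  unfold Iset
  refine le_trans (Finset.card_insert_le _ _) ?_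
  refine le_trans (Nat.add_le_add_right (Finset.card_insert_le _ _) 1) ?_
  simp

lemma self_succ_mem_Iset (c : ℕ) : c + 1 ∈ Iset c := by simp [Iset]

lemma mem_Iset_le {a c : ℕ} (h : a ∈ Iset c) : a ≤ c + 1 := by
  simp [Iset] at h; omega

lemma notMem_Iset {a c : ℕ} (h : a ∉ Iset c) : (2:ℤ) ≤ |(a:ℤ) - c| := by
  simp [Iset] at h
  rcases abs_cases ((a:ℤ) - c) with ⟨h1,h2⟩|⟨h1,h2⟩ <;> omega

lemma notMem_Iset' {a c : ℕ} (h : a ∉ Iset c) : (2:ℤ) ≤ |(c:ℤ) - a| := by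
  rw [abs_sub_comm]; exact notMem_Iset h

set_option maxHeartbeats 2000000 in
theorem stmt11 {V : Type*} [Fintype V] (G : SimpleGraph V) [DecidableRel G.Adj]
    (M : ℕ) (hM : 12 ≤ M)
    (hplanar : IsPlanarGraph G)
    (hΔ : G.maxDegree ≤ M)
    (hno : ¬ HasDTotalLabelling G 2 (M + 2))
    (hmin : ∀ H : SimpleGraph V, H < G → HasDTotalLabelling H 2 (M + 2)) :
    ∀ u v, G.degree u = 4 → G.Adj u v → 8 ≤ G.degree v := by
  classical
  intro u v hdu hadj
  by_contra hlt
  push_neg at hlt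
  have hdv : G.degree v ≤ 7 := by omega
  have hne : u ≠ v := G.ne_of_adj hadj
  set e : Sym2 V := s(u, v) with he
  set H := G.deleteEdges {e} with hH
  have hHle : H ≤ G := by rw [hH]; exact G.deleteEdges_le _
  have hHlt : H < G := by
    refine lt_of_le_of_ne hHle ?_
    intro hEq
    have : H.Adj u v := by rw [hEq]; exact hadj
    rw [hH, SimpleGraph.deleteEdges_adj] at this
    exact this.2 (by simp [he])
  obtain ⟨cv, ce, h1, h2, h3, h4, h5⟩ := hmin H hHlt
  have hHedge : ∀ f : Sym2 V, f ∈ G.edgeSet → f ≠ e → f ∈ H.edgeSet := by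
    intro f hf hfe
    rw [hH, SimpleGraph.edgeSet_deleteEdges]
    exact ⟨hf, by simpa using hfe⟩
  have hHadj : ∀ w1 w2 : V, G.Adj w1 w2 → s(w1, w2) ≠ e → H.Adj w1 w2 := by
    intro w1 w2 h hne'
    rw [hH, SimpleGraph.deleteEdges_adj]
    exact ⟨h, by simpa using hne'⟩
  -- edge decomposition
  have edge_at : ∀ (p : V) (f : Sym2 V), f ∈ G.edgeSet → p ∈ f →
      ∃ w, G.Adj p w ∧ f = s(p, w) := by
    intro p f hf hp
    induction f with
    | h q r =>
      rw [Sym2.mem_iff] at hp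
      rw [SimpleGraph.mem_edgeSet] at hf
      rcases hp with rfl | rfl
      · exact ⟨r, hf, rfl⟩
      · exact ⟨q, hf.symm, Sym2.eq_swap⟩
  set Au : Finset V := (G.neighborFinset u).erase v with hAudef
  set Av : Finset V := (G.neighborFinset v).erase u with hAvdef
  have hAuc : Au.card = 3 := by
    rw [hAudef, Finset.card_erase_of_mem (by simp [hadj])]
    simp [hdu]
  have hAvc : Av.card ≤ 6 := by
    rw [hAvdef, Finset.card_erase_of_mem (by simp [hadj.symm])]
    have : (G.neighborFinset v).card = G.degree v := rfl
    omega
  set Forba : Finset ℕ :=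
    ((G.neighborFinset u).image cv) ∪ Au.biUnion (fun w => Iset (ce s(u, w))) with hFa
  have hFac : Forba.card ≤ 13 := by
    refine le_trans (Finset.card_union_le _ _) ?_
    have hi : ((G.neighborFinset u).image cv).card ≤ 4 := by
      refine le_trans (Finset.card_image_le) ?_
      simp [hdu]
    have hb : (Au.biUnion (fun w => Iset (ce s(u, w)))).card ≤ 9 := by
      refine le_trans (Finset.card_biUnion_le) ?_
      refine le_trans (Finset.sum_le_card_nsmul _ _ 3 (fun w _ => Iset_card _)) ?_
      simp [hAuc]
    omega
  set F0 : Finset ℕ :=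
    (Au.image (fun w => ce s(u, w))) ∪ (Av.image (fun w => ce s(v, w))) ∪ Iset (cv v) with hF0
  have hF0c : F0.card ≤ 12 := by
    refine le_trans (Finset.card_union_le _ _) ?_
    have := Finset.card_union_le (Au.image (fun w => ce s(u, w))) (Av.image (fun w => ce s(v, w)))
    have h1' : (Au.image (fun w => ce s(u, w))).card ≤ 3 :=
      le_trans Finset.card_image_le (le_of_eq hAuc)
    have h2' : (Av.image (fun w => ce s(v, w))).card ≤ 6 :=
      le_trans Finset.card_image_le hAvc
    have h3' := Iset_card (cv v)
    omega
  set SA : Finset ℕ := Finset.range (M + 3) \ Forba with hSA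
  set Avail : Finset ℕ := Finset.range (M + 3) \ F0 with hAvail
  have hSAc : 2 ≤ SA.card := by
    have := Finset.le_card_sdiff Forba (Finset.range (M + 3))
    rw [Finset.card_range] at this
    rw [hSA]
    omega
  have hAvc3 : 3 ≤ Avail.card := by
    have := Finset.le_card_sdiff F0 (Finset.range (M + 3))
    rw [Finset.card_range] at this
    rw [hAvail]
    omega
  obtain ⟨a1, ha1, a2, ha2, ha12⟩ := Finset.one_lt_card.mp (by omega : 1 < SA.card)
  -- key choice
  have hkey : ∃ a ∈ SA, ∃ x ∈ Avail, x ∉ Iset a := by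
    by_contra hcon
    push_neg at hcon
    have hs1 : Avail ⊆ Iset a1 := hcon a1 ha1
    have hs2 : Avail ⊆ Iset a2 := hcon a2 ha2
    have he1 : Avail = Iset a1 :=
      Finset.eq_of_subset_of_card_le hs1 (le_trans (Iset_card a1) hAvc3)
    have he2 : Avail = Iset a2 :=
      Finset.eq_of_subset_of_card_le hs2 (le_trans (Iset_card a2) hAvc3)
    have k1 : a1 + 1 ≤ a2 + 1 := mem_Iset_le (by rw [← he2, he1]; exact self_succ_mem_Iset a1)
    have k2 : a2 + 1 ≤ a1 + 1 := mem_Iset_le (by rw [← he1, he2]; exact self_succ_mem_Iset a2)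
    exact ha12 (by omega)
  obtain ⟨a, haSA, x, hxA, hxI⟩ := hkey
  rw [hSA, Finset.mem_sdiff, Finset.mem_range] at haSA
  rw [hAvail, Finset.mem_sdiff, Finset.mem_range] at hxA
  obtain ⟨haR, haF⟩ := haSA
  obtain ⟨hxR, hxF⟩ := hxA
  -- the new labelling
  set cv' : V → ℕ := Function.update cv u a with hcv'
  set ce' : Sym2 V → ℕ := Function.update ce e x with hce'
  apply hno
  refine ⟨cv', ce', ?_, ?_, ?_, ?_, ?_⟩
  · intro w
    by_cases hwu : w = u
    · rw [hcv', hwu, Function.update_self]; omega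
    · rw [hcv', Function.update_of_ne hwu]; exact h1 w
  · intro f hf
    by_cases hfe : f = e
    · rw [hce', hfe, Function.update_self]; omega
    · rw [hce', Function.update_of_ne hfe]
      exact h2 f (hHedge f hf hfe)
  · intro w1 w2 hw
    by_cases h1u : w1 = u
    · have hadj2 : G.Adj u w2 := h1u ▸ hw
      have h2u : w2 ≠ u := fun h => G.irrefl (h ▸ hadj2)
      rw [hcv', h1u, Function.update_self, Function.update_of_ne h2u]
      intro hEq
      apply haF
      rw [hFa]
      refine Finset.mem_union_left _ ?_
      rw [hEq]
      exact Finset.mem_image_of_mem cv (by simp [hadj2])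
    · by_cases h2u : w2 = u
      · have hadj1 : G.Adj w1 u := h2u ▸ hw
        rw [hcv', h2u, Function.update_self, Function.update_of_ne h1u]
        intro hEq
        apply haF
        rw [hFa, ← hEq]
        exact Finset.mem_union_left _ (Finset.mem_image_of_mem cv (by simp [hadj1.symm]))
      · rw [hcv', Function.update_of_ne h1u, Function.update_of_ne h2u]
        refine h3 w1 w2 (hHadj w1 w2 hw ?_)
        intro hEq
        have : u ∈ s(w1, w2) := by rw [hEq, he]; simp
        rw [Sym2.mem_iff] at this
        rcases this with h'|h'
        · exact h1u h'.symm
        · exact h2u h'.symm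
  · -- edges
    have hedge_ne : ∀ f ∈ G.edgeSet, f ≠ e → (∃ w, w ∈ e ∧ w ∈ f) → ce f ∈ F0 := by
      rintro f hf hfe ⟨w, hwe, hwf⟩
      rw [he, Sym2.mem_iff] at hwe
      rcases hwe with rfl | rfl
      · obtain ⟨w', hadj', rfl⟩ := edge_at w f hf hwf
        have hw'v : w' ≠ v := by rintro rfl; exact hfe rfl
        rw [hF0]
        exact Finset.mem_union_left _ (Finset.mem_union_left _
          (Finset.mem_image_of_mem _ (by simp [hAudef, hadj', hw'v])))
      · obtain ⟨w', hadj', rfl⟩ := edge_at w f hf hwf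
        have hw'u : w' ≠ u := by
          rintro rfl
          exact hfe (by rw [he]; exact Sym2.eq_swap)
        rw [hF0]
        exact Finset.mem_union_left _ (Finset.mem_union_right _
          (Finset.mem_image_of_mem _ (by simp [hAvdef, hadj', hw'u])))
    intro f1 hf1 f2 hf2 hne12 hshare
    by_cases hf1e : f1 = e
    · subst hf1e
      have hf2e : f2 ≠ e := fun h => hne12 h.symm
      rw [hce', Function.update_self, Function.update_of_ne hf2e]
      intro hEq
      exact hxF (hEq ▸ hedge_ne f2 hf2 hf2e hshare)
    · by_cases hf2e : f2 = e
      · subst hf2e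
        rw [hce', Function.update_self, Function.update_of_ne hf1e]
        intro hEq
        obtain ⟨w, hw1, hw2⟩ := hshare
        exact hxF (hEq ▸ hedge_ne f1 hf1 hf1e ⟨w, hw2, hw1⟩)
      · rw [hce', Function.update_of_ne hf1e, Function.update_of_ne hf2e]
        exact h4 f1 (hHedge f1 hf1 hf1e) f2 (hHedge f2 hf2 hf2e) hne12 hshare
  · intro w f hf hwf
    by_cases hfe : f = e
    · subst hfe
      rw [hce', Function.update_self]
      rw [he, Sym2.mem_iff] at hwf
      rcases hwf with rfl | rfl
      · rw [hcv', Function.update_self]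
        exact notMem_Iset' hxI
      · rw [hcv', Function.update_of_ne (Ne.symm hne)]
        refine notMem_Iset' ?_
        intro hx
        exact hxF (by rw [hF0]; exact Finset.mem_union_right _ hx)
    · rw [hce', Function.update_of_ne hfe]
      by_cases hwu : w = u
      · subst hwu
        rw [hcv', Function.update_self]
        obtain ⟨w', hadj', rfl⟩ := edge_at w f hf hwf
        have hw'v : w' ≠ v := by rintro rfl; exact hfe rfl
        refine notMem_Iset ?_
        intro ha'
        apply haF
        rw [hFa]
        refine Finset.mem_union_right _ (Finset.mem_biUnion.mpr ⟨w', ?_, ha'⟩)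
        simp [hAudef, hadj', hw'v]
      · rw [hcv', Function.update_of_ne hwu]
        exact h5 w f (hHedge f hf hfe) hwf
end

section
/- Let G be a minimal (with respect to |V| + |E|) planar graph embedded in the plane with maximum degree at most M (M ≥ 12) admitting no (2,1)-total labelling with colors {0,...,M+2}. Then G has no triangular face whose three vertices have degrees 5, at most 6, and at most 6 respectively. -/
open SimpleGraph Finset

section Helpers

variable {V : Type*}

private def Ifin (a : ℕ) : Finset ℕ := {a-1, a, a+1}

private lemma Ifin_card (a : ℕ) : (Ifin a).card ≤ 3 := by
  refine (Finset.card_insert_le _ _).trans (Nat.succ_le_succ ?_)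
  exact (Finset.card_insert_le _ _).trans (by simp)

private lemma notI {a x : ℕ} (h : x ∉ Ifin a) : (2:ℤ) ≤ |(a:ℤ) - (x:ℤ)| := by
  simp [Ifin] at h
  rw [le_abs]
  omega

private lemma notI' {a x : ℕ} (h : x ∉ Ifin a) : (2:ℤ) ≤ |(x:ℤ) - (a:ℤ)| := by
  rw [abs_sub_comm]; exact notI h

private lemma exists_avoid (F : Finset ℕ) (n : ℕ) (h : F.card < n) :
    ∃ x, x < n ∧ x ∉ F := by
  have h2 : (Finset.range n).card ≤ ((Finset.range n) \ F).card + F.card :=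
    Finset.card_le_card_sdiff_add_card
  rw [Finset.card_range] at h2
  have : 0 < ((Finset.range n) \ F).card := by omega
  obtain ⟨x, hx⟩ := Finset.card_pos.mp this
  rw [Finset.mem_sdiff, Finset.mem_range] at hx
  exact ⟨x, hx.1, hx.2⟩

private lemma unionperm₁ (s t u v : Finset ℕ) : s ∪ t ∪ (u ∪ v) = s ∪ t ∪ u ∪ v := by
  ext x; simp only [Finset.mem_union]; tauto
private lemma unionperm₂ (s t u v : Finset ℕ) : s ∪ u ∪ (t ∪ v) = s ∪ t ∪ u ∪ v := by
  ext x; simp only [Finset.mem_union]; tauto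
private lemma unionperm₃ (s t u v : Finset ℕ) : s ∪ v ∪ (t ∪ u) = s ∪ t ∪ u ∪ v := by
  ext x; simp only [Finset.mem_union]; tauto
private lemma unionperm₄ (s t u v : Finset ℕ) : t ∪ u ∪ (s ∪ v) = s ∪ t ∪ u ∪ v := by
  ext x; simp only [Finset.mem_union]; tauto
private lemma unionperm₅ (s t u v : Finset ℕ) : t ∪ v ∪ (s ∪ u) = s ∪ t ∪ u ∪ v := by
  ext x; simp only [Finset.mem_union]; tauto
private lemma unionperm₆ (s t u v : Finset ℕ) : u ∪ v ∪ (s ∪ t) = s ∪ t ∪ u ∪ v := by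
  ext x; simp only [Finset.mem_union]; tauto

private lemma inter_empty_aux (s t r : Finset ℕ)
    (h : s.card + t.card + r.card ≤ (s ∪ t ∪ r).card) : s ∩ t = ∅ := by
  have h1 := Finset.card_union_le (s ∪ t) r
  have h2 := Finset.card_union_add_card_inter s t
  have h3 : (s ∩ t).card = 0 := by omega
  exact Finset.card_eq_zero.mp h3

private lemma recolor_vertex [DecidableEq V] {G : SimpleGraph V} {k : ℕ} {cv : V → ℕ}
    {ce : Sym2 V → ℕ} (h : IsDTotalLabelling G 2 k cv ce) {v : V} {a : ℕ} (hak : a ≤ k)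
    (hadj : ∀ u, G.Adj v u → a ≠ cv u)
    (hae : ∀ e ∈ G.edgeSet, v ∈ e → (2:ℤ) ≤ |(a:ℤ) - (ce e : ℤ)|) :
    IsDTotalLabelling G 2 k (Function.update cv v a) ce := by
  obtain ⟨h1,h2,h3,h4,h5⟩ := h
  refine ⟨?_, h2, ?_, h4, ?_⟩
  · intro u
    rcases eq_or_ne u v with rfl | hu
    · rwa [Function.update_self]
    · rw [Function.update_of_ne hu]; exact h1 u
  · intro u w huw
    rcases eq_or_ne u v with rfl | hu
    · rw [Function.update_self, Function.update_of_ne (G.ne_of_adj huw).symm]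
      exact hadj _ huw
    · rw [Function.update_of_ne hu]
      rcases eq_or_ne w v with rfl | hw
      · rw [Function.update_self]
        exact (hadj u huw.symm).symm
      · rw [Function.update_of_ne hw]; exact h3 _ _ huw
  · intro u e he hue
    rcases eq_or_ne u v with rfl | hu
    · rw [Function.update_self]
      exact_mod_cast hae e he hue
    · rw [Function.update_of_ne hu]; exact h5 u e he hue

private lemma extend_edge [DecidableEq V] {G₀ G₁ : SimpleGraph V} {k : ℕ} {cv : V → ℕ}
    {ce : Sym2 V → ℕ} (h : IsDTotalLabelling G₀ 2 k cv ce) (u v : V) (x : ℕ)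
    (hE : G₁.edgeSet ⊆ insert s(u,v) G₀.edgeSet)
    (huv : cv u ≠ cv v) (hxk : x ≤ k)
    (hxe : ∀ f ∈ G₀.edgeSet, f ≠ s(u,v) → (∃ w, w ∈ s(u,v) ∧ w ∈ f) → x ≠ ce f)
    (hxu : (2:ℤ) ≤ |(cv u : ℤ) - (x:ℤ)|) (hxv : (2:ℤ) ≤ |(cv v : ℤ) - (x:ℤ)|) :
    IsDTotalLabelling G₁ 2 k cv (Function.update ce s(u,v) x) := by
  obtain ⟨h1,h2,h3,h4,h5⟩ := h
  have hmem : ∀ e ∈ G₁.edgeSet, e ≠ s(u,v) → e ∈ G₀.edgeSet := by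
    intro e he hne
    rcases Set.mem_insert_iff.mp (hE he) with h' | h'
    · exact absurd h' hne
    · exact h'
  refine ⟨h1, ?_, ?_, ?_, ?_⟩
  · intro e he
    rcases eq_or_ne e s(u,v) with rfl | hne
    · rw [Function.update_self]; exact hxk
    · rw [Function.update_of_ne hne]; exact h2 e (hmem e he hne)
  · intro a b hab
    have hin := hE ((G₁.mem_edgeSet).mpr hab)
    rcases Set.mem_insert_iff.mp hin with heq | hm
    · rw [Sym2.eq_iff] at heq
      rcases heq with ⟨rfl, rfl⟩ | ⟨rfl, rfl⟩
      · exact huv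
      · exact huv.symm
    · exact h3 a b ((G₀.mem_edgeSet).mp hm)
  · intro e he e' he' hne hshare
    rcases eq_or_ne e s(u,v) with rfl | hq1
    · rcases eq_or_ne e' s(u,v) with rfl | hq2
      · exact absurd rfl hne
      · rw [Function.update_self, Function.update_of_ne hq2]
        exact hxe e' (hmem e' he' hq2) hq2 hshare
    · rw [Function.update_of_ne hq1]
      rcases eq_or_ne e' s(u,v) with rfl | hq2
      · rw [Function.update_self]
        intro hc
        obtain ⟨w, hw1, hw2⟩ := hshare
        exact hxe e (hmem e he hq1) hq1 ⟨w, hw2, hw1⟩ hc.symm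
      · rw [Function.update_of_ne hq2]
        exact h4 e (hmem e he hq1) e' (hmem e' he' hq2) hne hshare
  · intro w e he hwe
    rcases eq_or_ne e s(u,v) with rfl | hne
    · rw [Function.update_self]
      rcases Sym2.mem_iff.mp hwe with rfl | rfl
      · exact_mod_cast hxu
      · exact_mod_cast hxv
    · rw [Function.update_of_ne hne]; exact h5 w e (hmem e he hne) hwe

private lemma mem_incF [Fintype V] [DecidableEq V] {G : SimpleGraph V} [DecidableRel G.Adj]
    {v : V} {e : Sym2 V} : e ∈ G.incidenceFinset v ↔ e ∈ G.edgeSet ∧ v ∈ e := by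
  rw [SimpleGraph.mem_incidenceFinset]
  exact Iff.rfl

end Helpers
section Steps

variable {V : Type*} [Fintype V] [DecidableEq V]

private lemma step12 (G : SimpleGraph V) [DecidableRel G.Adj]
    (M : ℕ) (hM : 12 ≤ M) (v₁ v₂ v₃ : V)
    (h12 : G.Adj v₁ v₂) (h23 : G.Adj v₂ v₃) (h13 : G.Adj v₁ v₃)
    (hd1 : G.degree v₁ = 5) (hd3 : G.degree v₃ ≤ 6)
    (cv : V → ℕ) (ce : Sym2 V → ℕ)
    (hL : IsDTotalLabelling (G.deleteEdges {s(v₁,v₂), s(v₁,v₃)}) 2 (M+2) cv ce) :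
    ∃ cv' ce', IsDTotalLabelling (G.deleteEdges {s(v₁,v₂)}) 2 (M+2) cv' ce' ∧
      cv' v₁ ≠ cv' v₂ := by
  have hv12 : v₁ ≠ v₂ := h12.ne
  have hv13 : v₁ ≠ v₃ := h13.ne
  have hv23 : v₂ ≠ v₃ := h23.ne
  set e₂ : Sym2 V := s(v₁,v₂) with he₂
  set e₃ : Sym2 V := s(v₁,v₃) with he₃
  have hee : e₃ ≠ e₂ := by
    rw [he₂, he₃]
    intro h
    rw [Sym2.eq_iff] at h
    rcases h with ⟨-, h⟩ | ⟨h, -⟩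
    · exact hv23.symm h
    · exact hv12 h
  set H := G.deleteEdges {e₂, e₃} with hH
  have hHedge : H.edgeSet = G.edgeSet \ {e₂, e₃} := SimpleGraph.edgeSet_deleteEdges _
  -- the three incident edges of v₁ in H
  set S : Finset (Sym2 V) := ((G.incidenceFinset v₁).erase e₂).erase e₃ with hS
  have he₂m : e₂ ∈ G.incidenceFinset v₁ := by
    rw [mem_incF]
    exact ⟨(G.mem_edgeSet).mpr h12, by rw [he₂]; simp⟩
  have he₃m : e₃ ∈ (G.incidenceFinset v₁).erase e₂ := by
    rw [Finset.mem_erase]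
    refine ⟨hee, ?_⟩
    rw [mem_incF]
    exact ⟨(G.mem_edgeSet).mpr h13, by rw [he₃]; simp⟩
  have hScard : S.card = 3 := by
    rw [hS, Finset.card_erase_of_mem he₃m, Finset.card_erase_of_mem he₂m,
      SimpleGraph.card_incidenceFinset_eq_degree, hd1]
  have hSmem : ∀ f ∈ H.edgeSet, v₁ ∈ f → f ∈ S := by
    intro f hf hv
    rw [hHedge] at hf
    obtain ⟨hfG, hfne⟩ := hf
    simp only [Set.mem_insert_iff, Set.mem_singleton_iff, not_or] at hfne
    rw [hS, Finset.mem_erase, Finset.mem_erase, mem_incF]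
    exact ⟨hfne.2, hfne.1, hfG, hv⟩
  -- step 1 : recolor v₁
  set J : Finset ℕ := S.biUnion (fun f => Ifin (ce f)) with hJ
  have hJcard : J.card ≤ 9 := by
    refine (Finset.card_biUnion_le).trans ?_
    calc ∑ f ∈ S, (Ifin (ce f)).card ≤ ∑ f ∈ S, 3 :=
          Finset.sum_le_sum (fun f _ => Ifin_card _)
      _ = 9 := by simp [Finset.sum_const, hScard]
  set Fv : Finset ℕ := ((G.neighborFinset v₁).image cv) ∪ J with hFv
  have hFvcard : Fv.card < M + 3 := by
    have h1 : ((G.neighborFinset v₁).image cv).card ≤ 5 := by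
      refine (Finset.card_image_le).trans ?_
      rw [SimpleGraph.card_neighborFinset_eq_degree, hd1]
    have := Finset.card_union_le ((G.neighborFinset v₁).image cv) J
    rw [hFv]
    omega
  obtain ⟨a₁, ha₁lt, ha₁F⟩ := exists_avoid Fv (M+3) hFvcard
  have ha₁nbr : ∀ u, G.Adj v₁ u → a₁ ≠ cv u := by
    intro u hu hc
    exact ha₁F (Finset.mem_union_left _ (Finset.mem_image.mpr
      ⟨u, (G.mem_neighborFinset _ _).mpr hu, hc.symm⟩))
  have hL1 : IsDTotalLabelling H 2 (M+2) (Function.update cv v₁ a₁) ce := by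
    refine recolor_vertex hL (by omega) ?_ ?_
    · intro u hu
      exact ha₁nbr u ((SimpleGraph.deleteEdges_adj).mp hu).1
    · intro e he hv
      refine notI' ?_
      intro hc
      exact ha₁F (Finset.mem_union_right _
        (Finset.mem_biUnion.mpr ⟨e, hSmem e he hv, hc⟩))
  -- step 2 : color e₃
  set cv₁ := Function.update cv v₁ a₁ with hcv₁
  have hcv₁v₁ : cv₁ v₁ = a₁ := Function.update_self _ _ _
  have hcv₁v₂ : cv₁ v₂ = cv v₂ := Function.update_of_ne hv12.symm _ _
  have hcv₁v₃ : cv₁ v₃ = cv v₃ := Function.update_of_ne hv13.symm _ _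
  set F₃ : Finset ℕ := (S.image ce) ∪ (((G.incidenceFinset v₃).erase e₃).image ce)
      ∪ Ifin a₁ ∪ Ifin (cv v₃) with hF₃
  have hF₃card : F₃.card < M + 3 := by
    have c1 : (S.image ce).card ≤ 3 := (Finset.card_image_le).trans (by omega)
    have c2 : (((G.incidenceFinset v₃).erase e₃).image ce).card ≤ 5 := by
      refine (Finset.card_image_le).trans ?_
      have he₃3 : e₃ ∈ G.incidenceFinset v₃ := by
        rw [mem_incF]
        exact ⟨(G.mem_edgeSet).mpr h13, by rw [he₃]; simp⟩
      rw [Finset.card_erase_of_mem he₃3, SimpleGraph.card_incidenceFinset_eq_degree]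
      omega
    have c3 := Ifin_card a₁
    have c4 := Ifin_card (cv v₃)
    have u1 := Finset.card_union_le ((S.image ce) ∪ (((G.incidenceFinset v₃).erase e₃).image ce)
      ∪ Ifin a₁) (Ifin (cv v₃))
    have u2 := Finset.card_union_le ((S.image ce) ∪ (((G.incidenceFinset v₃).erase e₃).image ce))
      (Ifin a₁)
    have u3 := Finset.card_union_le (S.image ce) (((G.incidenceFinset v₃).erase e₃).image ce)
    rw [hF₃]
    omega
  obtain ⟨x₃, hx₃lt, hx₃F⟩ := exists_avoid F₃ (M+3) hF₃card
  refine ⟨cv₁, Function.update ce e₃ x₃, ?_, ?_⟩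
  · refine extend_edge hL1 v₁ v₃ x₃ ?_ ?_ (by omega) ?_ ?_ ?_
    · intro e he
      rw [SimpleGraph.edgeSet_deleteEdges] at he
      rcases eq_or_ne e e₃ with rfl | hne
      · exact Set.mem_insert _ _
      · refine Set.mem_insert_of_mem _ ?_
        rw [hHedge]
        refine ⟨he.1, ?_⟩
        simp only [Set.mem_insert_iff, Set.mem_singleton_iff, not_or]
        exact ⟨by simpa using he.2, hne⟩
    · rw [hcv₁v₁, hcv₁v₃]
      exact ha₁nbr v₃ h13
    · intro f hf hfe hsh
      obtain ⟨w, hw1, hw2⟩ := hsh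
      rcases Sym2.mem_iff.mp hw1 with rfl | rfl
      · intro hc
        exact hx₃F (Finset.mem_union_left _ (Finset.mem_union_left _ (Finset.mem_union_left _
          (Finset.mem_image.mpr ⟨f, hSmem f hf hw2, hc.symm⟩))))
      · intro hc
        refine hx₃F (Finset.mem_union_left _ (Finset.mem_union_left _ (Finset.mem_union_right _
          (Finset.mem_image.mpr ⟨f, ?_, hc.symm⟩))))
        rw [Finset.mem_erase, mem_incF]
        rw [hHedge] at hf
        exact ⟨hfe, hf.1, hw2⟩
    · rw [hcv₁v₁]
      exact notI (fun hc => hx₃F (Finset.mem_union_left _ (Finset.mem_union_right _ hc)))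
    · rw [hcv₁v₃]
      exact notI (fun hc => hx₃F (Finset.mem_union_right _ hc))
  · rw [hcv₁v₁, hcv₁v₂]
    exact ha₁nbr v₂ h12

private lemma disj_mem {s t : Finset ℕ} (h : s ∩ t = ∅) {x : ℕ} (hx : x ∈ s) (hy : x ∈ t) :
    False := by
  have : x ∈ s ∩ t := Finset.mem_inter.mpr ⟨hx, hy⟩
  rw [h] at this
  exact Finset.notMem_empty _ this

private lemma step3 (G : SimpleGraph V) [DecidableRel G.Adj]
    (M : ℕ) (hM : 12 ≤ M) (v₁ v₂ v₃ : V)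
    (h12 : G.Adj v₁ v₂) (h23 : G.Adj v₂ v₃) (h13 : G.Adj v₁ v₃)
    (hd1 : G.degree v₁ = 5) (hd2 : G.degree v₂ ≤ 6) (hd3 : G.degree v₃ ≤ 6)
    (cv : V → ℕ) (ce : Sym2 V → ℕ)
    (hL : IsDTotalLabelling (G.deleteEdges {s(v₁,v₂)}) 2 (M+2) cv ce)
    (hne : cv v₁ ≠ cv v₂) : HasDTotalLabelling G 2 (M+2) := by
  have hv12 : v₁ ≠ v₂ := h12.ne
  have hv13 : v₁ ≠ v₃ := h13.ne
  have hv23 : v₂ ≠ v₃ := h23.ne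
  set e₂ : Sym2 V := s(v₁,v₂) with he₂def
  set e₃ : Sym2 V := s(v₁,v₃) with he₃def
  set f₂₃ : Sym2 V := s(v₂,v₃) with hfdef
  have he₃e₂ : e₃ ≠ e₂ := by
    rw [he₂def, he₃def]; intro h; rw [Sym2.eq_iff] at h
    rcases h with ⟨-, h⟩ | ⟨h, -⟩
    · exact hv23.symm h
    · exact hv12 h
  have hfe₂ : f₂₃ ≠ e₂ := by
    rw [he₂def, hfdef]; intro h; rw [Sym2.eq_iff] at h
    rcases h with ⟨h, -⟩ | ⟨-, h⟩
    · exact hv12 h.symm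
    · exact hv13 h.symm
  have hfe₃ : f₂₃ ≠ e₃ := by
    rw [he₃def, hfdef]; intro h; rw [Sym2.eq_iff] at h
    rcases h with ⟨h, -⟩ | ⟨h, -⟩
    · exact hv12 h.symm
    · exact hv23 h
  set G'' := G.deleteEdges {e₂} with hG''
  have hG''edge : G''.edgeSet = G.edgeSet \ {e₂} := SimpleGraph.edgeSet_deleteEdges _
  have hGsub : G.edgeSet ⊆ insert e₂ G''.edgeSet := by
    intro e he
    rcases eq_or_ne e e₂ with rfl | hn
    · exact Set.mem_insert _ _
    · exact Set.mem_insert_of_mem _ (by rw [hG''edge]; exact ⟨he, hn⟩)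
  have he₃G'' : e₃ ∈ G''.edgeSet := by
    rw [hG''edge]
    exact ⟨(G.mem_edgeSet).mpr h13, he₃e₂⟩
  have hfG'' : f₂₃ ∈ G''.edgeSet := by
    rw [hG''edge]
    exact ⟨(G.mem_edgeSet).mpr h23, hfe₂⟩
  have hv₁e₃ : v₁ ∈ e₃ := by rw [he₃def]; simp
  have hv₃e₃ : v₃ ∈ e₃ := by rw [he₃def]; simp
  have hv₂f : v₂ ∈ f₂₃ := by rw [hfdef]; simp
  have hv₃f : v₃ ∈ f₂₃ := by rw [hfdef]; simp
  have he₂i1 : e₂ ∈ G.incidenceFinset v₁ := by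
    rw [mem_incF]; exact ⟨(G.mem_edgeSet).mpr h12, by rw [he₂def]; simp⟩
  have he₂i2 : e₂ ∈ G.incidenceFinset v₂ := by
    rw [mem_incF]; exact ⟨(G.mem_edgeSet).mpr h12, by rw [he₂def]; simp⟩
  have he₃i3 : e₃ ∈ G.incidenceFinset v₃ := by
    rw [mem_incF]; exact ⟨(G.mem_edgeSet).mpr h13, hv₃e₃⟩
  set A : Finset ℕ := ((G.incidenceFinset v₁).erase e₂).image ce with hA
  set B : Finset ℕ := ((G.incidenceFinset v₂).erase e₂).image ce with hB
  set C₃ : Finset ℕ := ((G.incidenceFinset v₃).erase e₃).image ce with hC₃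
  set I₁ : Finset ℕ := Ifin (cv v₁) with hI₁
  set I₂ : Finset ℕ := Ifin (cv v₂) with hI₂
  set I₃ : Finset ℕ := Ifin (cv v₃) with hI₃
  have cardA : A.card ≤ 4 := by
    rw [hA]
    refine Finset.card_image_le.trans ?_
    rw [Finset.card_erase_of_mem he₂i1, SimpleGraph.card_incidenceFinset_eq_degree, hd1]
  have cardB : B.card ≤ 5 := by
    rw [hB]
    refine Finset.card_image_le.trans ?_
    rw [Finset.card_erase_of_mem he₂i2, SimpleGraph.card_incidenceFinset_eq_degree]
    omega
  have cardC₃ : C₃.card ≤ 5 := by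
    rw [hC₃]
    refine Finset.card_image_le.trans ?_
    rw [Finset.card_erase_of_mem he₃i3, SimpleGraph.card_incidenceFinset_eq_degree]
    omega
  have cardI₁ : I₁.card ≤ 3 := Ifin_card _
  have cardI₂ : I₂.card ≤ 3 := Ifin_card _
  have cardI₃ : I₃.card ≤ 3 := Ifin_card _
  have memA : ∀ f ∈ G''.edgeSet, v₁ ∈ f → ce f ∈ A := by
    intro f hf hv
    rw [hG''edge] at hf
    rw [hA]
    exact Finset.mem_image.mpr ⟨f, Finset.mem_erase.mpr ⟨hf.2, mem_incF.mpr ⟨hf.1, hv⟩⟩, rfl⟩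
  have memB : ∀ f ∈ G''.edgeSet, v₂ ∈ f → ce f ∈ B := by
    intro f hf hv
    rw [hG''edge] at hf
    rw [hB]
    exact Finset.mem_image.mpr ⟨f, Finset.mem_erase.mpr ⟨hf.2, mem_incF.mpr ⟨hf.1, hv⟩⟩, rfl⟩
  have memC₃ : ∀ f ∈ G''.edgeSet, v₃ ∈ f → f ≠ e₃ → ce f ∈ C₃ := by
    intro f hf hv hn
    rw [hG''edge] at hf
    rw [hC₃]
    exact Finset.mem_image.mpr ⟨f, Finset.mem_erase.mpr ⟨hn, mem_incF.mpr ⟨hf.1, hv⟩⟩, rfl⟩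
  have hαA : ce e₃ ∈ A := memA e₃ he₃G'' hv₁e₃
  have hβB : ce f₂₃ ∈ B := memB f₂₃ hfG'' hv₂f
  set F : Finset ℕ := A ∪ B ∪ I₁ ∪ I₂ with hF
  by_cases hcov : ∃ x, x < M + 3 ∧ x ∉ F
  · -- easy case : a free color for e₂ exists
    obtain ⟨x, hxlt, hxF⟩ := hcov
    have hxA : x ∉ A := by
      intro h; exact hxF (by rw [hF]; exact Finset.mem_union_left _ (Finset.mem_union_left _ (Finset.mem_union_left _ h)))
    have hxB : x ∉ B := by
      intro h; exact hxF (by rw [hF]; exact Finset.mem_union_left _ (Finset.mem_union_left _ (Finset.mem_union_right _ h)))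
    have hxI₁ : x ∉ I₁ := by
      intro h; exact hxF (by rw [hF]; exact Finset.mem_union_left _ (Finset.mem_union_right _ h))
    have hxI₂ : x ∉ I₂ := by
      intro h; exact hxF (by rw [hF]; exact Finset.mem_union_right _ h)
    refine ⟨cv, Function.update ce e₂ x, ?_⟩
    refine extend_edge hL v₁ v₂ x hGsub hne (by omega) ?_ (notI hxI₁) (notI hxI₂)
    intro f hf hfe hsh
    obtain ⟨w, hw1, hw2⟩ := hsh
    rcases Sym2.mem_iff.mp hw1 with rfl | rfl
    · exact fun hc => hxA (hc ▸ memA f hf hw2)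
    · exact fun hc => hxB (hc ▸ memB f hf hw2)
  · -- tight case
    push_neg at hcov
    have hPF : Finset.range (M+3) ⊆ F := fun x hx => hcov x (Finset.mem_range.mp hx)
    have hsumle : F.card ≤ A.card + B.card + I₁.card + I₂.card := by
      rw [hF]
      have u1 := Finset.card_union_le (A ∪ B ∪ I₁) I₂
      have u2 := Finset.card_union_le (A ∪ B) I₁
      have u3 := Finset.card_union_le A B
      omega
    have hcard1 : M + 3 ≤ F.card := by
      have := Finset.card_le_card hPF
      simpa using this
    have hM12 : M = 12 := by omega
    have hFeq : F = Finset.range (M+3) :=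
      (Finset.eq_of_subset_of_card_le hPF (by rw [Finset.card_range]; omega)).symm
    have hFcard : F.card = 15 := by rw [hFeq, Finset.card_range, hM12]
    have cA : A.card = 4 := by omega
    have cB : B.card = 5 := by omega
    have cI₁ : I₁.card = 3 := by omega
    have cI₂ : I₂.card = 3 := by omega
    have hltF : ∀ x ∈ F, x ≤ M + 2 := by
      intro x hx
      rw [hFeq, Finset.mem_range] at hx
      omega
    -- pairwise disjointness
    have dAB : A ∩ B = ∅ := by
      apply inter_empty_aux A B (I₁ ∪ I₂)
      have hEq : A ∪ B ∪ (I₁ ∪ I₂) = F := (unionperm₁ A B I₁ I₂).trans hF.symm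
      rw [hEq, hFcard]
      have := Finset.card_union_le I₁ I₂
      omega
    have dAI₁ : A ∩ I₁ = ∅ := by
      apply inter_empty_aux A I₁ (B ∪ I₂)
      have hEq : A ∪ I₁ ∪ (B ∪ I₂) = F := (unionperm₂ A B I₁ I₂).trans hF.symm
      rw [hEq, hFcard]
      have := Finset.card_union_le B I₂
      omega
    have dAI₂ : A ∩ I₂ = ∅ := by
      apply inter_empty_aux A I₂ (B ∪ I₁)
      have hEq : A ∪ I₂ ∪ (B ∪ I₁) = F := (unionperm₃ A B I₁ I₂).trans hF.symm
      rw [hEq, hFcard]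
      have := Finset.card_union_le B I₁
      omega
    have dBI₁ : B ∩ I₁ = ∅ := by
      apply inter_empty_aux B I₁ (A ∪ I₂)
      have hEq : B ∪ I₁ ∪ (A ∪ I₂) = F := (unionperm₄ A B I₁ I₂).trans hF.symm
      rw [hEq, hFcard]
      have := Finset.card_union_le A I₂
      omega
    have dBI₂ : B ∩ I₂ = ∅ := by
      apply inter_empty_aux B I₂ (A ∪ I₁)
      have hEq : B ∪ I₂ ∪ (A ∪ I₁) = F := (unionperm₅ A B I₁ I₂).trans hF.symm
      rw [hEq, hFcard]
      have := Finset.card_union_le A I₁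
      omega
    have dI₁I₂ : I₁ ∩ I₂ = ∅ := by
      apply inter_empty_aux I₁ I₂ (A ∪ B)
      have hEq : I₁ ∪ I₂ ∪ (A ∪ B) = F := (unionperm₆ A B I₁ I₂).trans hF.symm
      rw [hEq, hFcard]
      have := Finset.card_union_le A B
      omega
    have hTT' : ∀ x, x ∈ B ∪ I₂ → x ∈ A ∪ I₁ → False := by
      intro x hT hT'
      rcases Finset.mem_union.mp hT with h1 | h1 <;>
        rcases Finset.mem_union.mp hT' with h2 | h2
      · exact disj_mem dAB h2 h1
      · exact disj_mem dBI₁ h1 h2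
      · exact disj_mem dAI₂ h2 h1
      · exact disj_mem dI₁I₂ h2 h1
    have hTF : ∀ x ∈ B ∪ I₂, x ∈ F := by
      intro x hx
      rw [hF]
      rcases Finset.mem_union.mp hx with h | h
      · exact Finset.mem_union_left _ (Finset.mem_union_left _ (Finset.mem_union_right _ h))
      · exact Finset.mem_union_right _ h
    have hT'F : ∀ x ∈ A ∪ I₁, x ∈ F := by
      intro x hx
      rw [hF]
      rcases Finset.mem_union.mp hx with h | h
      · exact Finset.mem_union_left _ (Finset.mem_union_left _ (Finset.mem_union_left _ h))
      · exact Finset.mem_union_left _ (Finset.mem_union_right _ h)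
    have cardT : (B ∪ I₂).card = 8 := by
      have h1 := Finset.card_union_add_card_inter B I₂
      rw [dBI₂] at h1
      simp at h1
      omega
    have cardT' : (A ∪ I₁).card = 7 := by
      have h1 := Finset.card_union_add_card_inter A I₁
      rw [dAI₁] at h1
      simp at h1
      omega
    by_cases hopt : ∃ γ, γ ∈ B ∪ I₂ ∧ γ ∉ C₃ ∧ γ ∉ I₃
    · -- Option 1 : recolor v₁v₃ with γ, then color e₂ with the old color of v₁v₃
      obtain ⟨γ, hγT, hγC₃, hγI₃⟩ := hopt
      have hγA : γ ∉ A := fun h => hTT' γ hγT (Finset.mem_union_left _ h)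
      have hγI₁ : γ ∉ I₁ := fun h => hTT' γ hγT (Finset.mem_union_right _ h)
      have hγk : γ ≤ M + 2 := hltF γ (hTF γ hγT)
      have hL2 : IsDTotalLabelling G'' 2 (M+2) cv (Function.update ce e₃ γ) := by
        refine extend_edge hL v₁ v₃ γ ?_ ?_ hγk ?_ (notI hγI₁) (notI hγI₃)
        · exact Set.subset_insert _ _
        · refine hL.2.2.1 v₁ v₃ ?_
          rw [hG'']
          exact (SimpleGraph.deleteEdges_adj).mpr ⟨h13, fun h => he₃e₂ h⟩
        · intro f hf hfe hsh
          obtain ⟨w, hw1, hw2⟩ := hsh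
          rcases Sym2.mem_iff.mp hw1 with rfl | rfl
          · exact fun hc => hγA (hc ▸ memA f hf hw2)
          · exact fun hc => hγC₃ (hc ▸ memC₃ f hf hw2 hfe)
      set α := ce e₃ with hα
      have hαγ : α ≠ γ := fun h => hγA (h ▸ hαA)
      have hαI₂ : α ∉ I₂ := fun h => disj_mem dAI₂ hαA h
      refine ⟨cv, Function.update (Function.update ce e₃ γ) e₂ α, ?_⟩
      refine extend_edge hL2 v₁ v₂ α hGsub hne (hL.2.1 e₃ he₃G'') ?_ ?_ (notI hαI₂)
      · intro f hf hfe hsh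
        obtain ⟨w, hw1, hw2⟩ := hsh
        rcases eq_or_ne f e₃ with rfl | hfe3
        · rw [Function.update_self]
          exact hαγ
        · rw [Function.update_of_ne hfe3]
          rcases Sym2.mem_iff.mp hw1 with rfl | rfl
          · exact hL.2.2.2.1 e₃ he₃G'' f hf (Ne.symm hfe3) ⟨_, hv₁e₃, hw2⟩
          · exact fun hc => disj_mem dAB hαA (hc ▸ memB f hf hw2)
      · have := hL.2.2.2.2 v₁ e₃ he₃G'' hv₁e₃
        exact_mod_cast this
    · -- Option 2 : recolor v₂v₃ with δ, then color e₂ with the old color of v₂v₃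
      push_neg at hopt
      have hTsub : ∀ x ∈ B ∪ I₂, x ∈ C₃ ∪ I₃ := by
        intro x hx
        by_cases h : x ∈ C₃
        · exact Finset.mem_union_left _ h
        · exact Finset.mem_union_right _ (hopt x hx h)
      have hsplit : (B ∪ I₂) ⊆ ((B ∪ I₂) ∩ C₃) ∪ ((B ∪ I₂) ∩ I₃) := by
        intro x hx
        rcases Finset.mem_union.mp (hTsub x hx) with h | h
        · exact Finset.mem_union_left _ (Finset.mem_inter.mpr ⟨hx, h⟩)
        · exact Finset.mem_union_right _ (Finset.mem_inter.mpr ⟨hx, h⟩)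
      have h8 : 8 ≤ ((B ∪ I₂) ∩ C₃).card + ((B ∪ I₂) ∩ I₃).card := by
        have h1 := Finset.card_le_card hsplit
        have h2 := Finset.card_union_le ((B ∪ I₂) ∩ C₃) ((B ∪ I₂) ∩ I₃)
        omega
      have hic : ((B ∪ I₂) ∩ C₃).card ≤ C₃.card := Finset.card_le_card Finset.inter_subset_right
      have hii : ((B ∪ I₂) ∩ I₃).card ≤ I₃.card := Finset.card_le_card Finset.inter_subset_right
      have hC₃T : C₃ ⊆ B ∪ I₂ := by
        have heq : (B ∪ I₂) ∩ C₃ = C₃ :=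
          Finset.eq_of_subset_of_card_le Finset.inter_subset_right (by omega)
        intro x hx
        rw [← heq] at hx
        exact (Finset.mem_inter.mp hx).1
      have hI₃T : I₃ ⊆ B ∪ I₂ := by
        have heq : (B ∪ I₂) ∩ I₃ = I₃ :=
          Finset.eq_of_subset_of_card_le Finset.inter_subset_right (by omega)
        intro x hx
        rw [← heq] at hx
        exact (Finset.mem_inter.mp hx).1
      -- pick δ
      have hpos : 0 < ((A ∪ I₁).erase (ce e₃)).card := by
        have := Finset.pred_card_le_card_erase (s := A ∪ I₁) (a := ce e₃)
        omega
      obtain ⟨δ, hδ⟩ := Finset.card_pos.mp hpos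
      rw [Finset.mem_erase] at hδ
      obtain ⟨hδα, hδT'⟩ := hδ
      have hδB : δ ∉ B := fun h => hTT' δ (Finset.mem_union_left _ h) hδT'
      have hδI₂ : δ ∉ I₂ := fun h => hTT' δ (Finset.mem_union_right _ h) hδT'
      have hδC₃ : δ ∉ C₃ := fun h => hTT' δ (hC₃T h) hδT'
      have hδI₃ : δ ∉ I₃ := fun h => hTT' δ (hI₃T h) hδT'
      have hδk : δ ≤ M + 2 := hltF δ (hT'F δ hδT')
      have hL2 : IsDTotalLabelling G'' 2 (M+2) cv (Function.update ce f₂₃ δ) := by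
        refine extend_edge hL v₂ v₃ δ ?_ ?_ hδk ?_ (notI hδI₂) (notI hδI₃)
        · exact Set.subset_insert _ _
        · refine hL.2.2.1 v₂ v₃ ?_
          rw [hG'']
          exact (SimpleGraph.deleteEdges_adj).mpr ⟨h23, fun h => hfe₂ h⟩
        · intro f hf hfe hsh
          obtain ⟨w, hw1, hw2⟩ := hsh
          rcases Sym2.mem_iff.mp hw1 with rfl | rfl
          · exact fun hc => hδB (hc ▸ memB f hf hw2)
          · rcases eq_or_ne f e₃ with rfl | hfe3
            · exact fun hc => hδα hc
            · exact fun hc => hδC₃ (hc ▸ memC₃ f hf hw2 hfe3)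
      set β := ce f₂₃ with hβ
      have hβI₁ : β ∉ I₁ := fun h => disj_mem dBI₁ hβB h
      have hβI₂ : β ∉ I₂ := fun h => disj_mem dBI₂ hβB h
      refine ⟨cv, Function.update (Function.update ce f₂₃ δ) e₂ β, ?_⟩
      refine extend_edge hL2 v₁ v₂ β hGsub hne (hL.2.1 f₂₃ hfG'') ?_ (notI hβI₁) (notI hβI₂)
      intro f hf hfe hsh
      obtain ⟨w, hw1, hw2⟩ := hsh
      rcases eq_or_ne f f₂₃ with rfl | hff
      · rw [Function.update_self]
        exact fun h => hTT' β (Finset.mem_union_left _ hβB) (h ▸ hδT')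
      · rw [Function.update_of_ne hff]
        rcases Sym2.mem_iff.mp hw1 with rfl | rfl
        · exact fun hc => disj_mem dAB (hc ▸ memA f hf hw2) hβB
        · exact hL.2.2.2.1 f₂₃ hfG'' f hf (Ne.symm hff) ⟨_, hv₂f, hw2⟩

end Steps

theorem stmt12 {V : Type*} [Fintype V] (G : SimpleGraph V) [DecidableRel G.Adj]
    (M : ℕ) (hM : 12 ≤ M)
    (hplanar : IsPlanarGraph G)
    (hΔ : G.maxDegree ≤ M)
    (hno : ¬ HasDTotalLabelling G 2 (M + 2))
    (hmin : ∀ H : SimpleGraph V, H < G → HasDTotalLabelling H 2 (M + 2)) :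
    ¬ ∃ v₁ v₂ v₃ : V, G.Adj v₁ v₂ ∧ G.Adj v₂ v₃ ∧ G.Adj v₁ v₃ ∧
      G.degree v₁ = 5 ∧ G.degree v₂ ≤ 6 ∧ G.degree v₃ ≤ 6 := by
  classical
  rintro ⟨v₁, v₂, v₃, h12, h23, h13, hd1, hd2, hd3⟩
  have hlt : G.deleteEdges {s(v₁,v₂), s(v₁,v₃)} < G := by
    refine lt_of_le_of_ne (SimpleGraph.deleteEdges_le _) ?_
    intro h
    have h2 : (G.deleteEdges {s(v₁,v₂), s(v₁,v₃)}).Adj v₁ v₂ := by rw [h]; exact h12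
    rw [SimpleGraph.deleteEdges_adj] at h2
    exact h2.2 (by simp)
  obtain ⟨cv, ce, hL⟩ := hmin _ hlt
  obtain ⟨cv', ce', hL', hne'⟩ := step12 G M hM v₁ v₂ v₃ h12 h23 h13 hd1 hd3 cv ce hL
  exact hno (step3 G M hM v₁ v₂ v₃ h12 h23 h13 hd1 hd2 hd3 cv' ce' hL' hne')
end

section
/- Let M ≥ 12. Let v be a vertex of a graph G adjacent to vertices v₁ and v₂ of degree 2, with common second neighbor x' (so v v₁ x' v₂ forms a 4-cycle), d(v) ≤ M. If H = G − {v₁, v₂} admits a (2,1)-total labelling with colors {0,...,M+2}, and in H both v and x' have degree at most M − 2, then G admits a (2,1)-total labelling with colors {0,...,M+2}. -/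
open SimpleGraph Finset

lemma gap_of_notMem {a t : ℕ} (h : a ∉ Finset.Icc (t-1) (t+1)) : (2:ℤ) ≤ |(a:ℤ) - t| := by
  simp only [Finset.mem_Icc, not_and_or, not_le] at h
  rcases abs_cases ((a:ℤ) - t) with ⟨h1,_⟩|⟨h1,_⟩ <;> omega

lemma c4_choose (L1 L2 L3 L4 : Finset ℕ) (h1 : 2 ≤ L1.card) (h2 : 2 ≤ L2.card)
    (h3 : 2 ≤ L3.card) (h4 : 2 ≤ L4.card) :
    ∃ a b c d, a ∈ L1 ∧ b ∈ L2 ∧ c ∈ L3 ∧ d ∈ L4 ∧ a ≠ b ∧ b ≠ c ∧ c ≠ d ∧ d ≠ a := by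
  classical
  have pick : ∀ (L : Finset ℕ) (x : ℕ), 2 ≤ L.card → ∃ y ∈ L, y ≠ x := by
    intro L x hL
    have hne : (L \ {x}).Nonempty := by
      rw [← Finset.card_pos]
      have := Finset.le_card_sdiff ({x} : Finset ℕ) L
      simp only [Finset.card_singleton] at this
      omega
    obtain ⟨y, hy⟩ := hne
    rw [Finset.mem_sdiff, Finset.mem_singleton] at hy
    exact ⟨y, hy.1, hy.2⟩
  by_cases s12 : L1 ⊆ L2
  · by_cases s23 : L2 ⊆ L3
    · by_cases s34 : L3 ⊆ L4
      · by_cases s41 : L4 ⊆ L1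
        · obtain ⟨a, ha, b, hb, hab⟩ := Finset.one_lt_card.mp (by omega : 1 < L1.card)
          exact ⟨a, b, a, b, ha, s12 hb, s23 (s12 ha), s34 (s23 (s12 hb)), hab, Ne.symm hab,
            hab, Ne.symm hab⟩
        · obtain ⟨d, hd4, hd1⟩ := Finset.not_subset.mp s41
          obtain ⟨c, hc, hcd⟩ := pick L3 d h3
          obtain ⟨b, hb, hbc⟩ := pick L2 c h2
          obtain ⟨a, ha, hab⟩ := pick L1 b h1
          exact ⟨a, b, c, d, ha, hb, hc, hd4, hab, hbc, hcd, fun h => hd1 (h ▸ ha)⟩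
      · obtain ⟨c, hc3, hc4⟩ := Finset.not_subset.mp s34
        obtain ⟨b, hb, hbc⟩ := pick L2 c h2
        obtain ⟨a, ha, hab⟩ := pick L1 b h1
        obtain ⟨d, hd, hda⟩ := pick L4 a h4
        exact ⟨a, b, c, d, ha, hb, hc3, hd, hab, hbc, fun h => hc4 (h ▸ hd), hda⟩
    · obtain ⟨b, hb2, hb3⟩ := Finset.not_subset.mp s23
      obtain ⟨a, ha, hab⟩ := pick L1 b h1
      obtain ⟨d, hd, hda⟩ := pick L4 a h4
      obtain ⟨c, hc, hcd⟩ := pick L3 d h3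
      exact ⟨a, b, c, d, ha, hb2, hc, hd, hab, fun h => hb3 (h ▸ hc), hcd, hda⟩
  · obtain ⟨a, ha1, ha2⟩ := Finset.not_subset.mp s12
    obtain ⟨d, hd, hda⟩ := pick L4 a h4
    obtain ⟨c, hc, hcd⟩ := pick L3 d h3
    obtain ⟨b, hb, hbc⟩ := pick L2 c h2
    exact ⟨a, b, c, d, ha1, hb, hc, hd, fun h => ha2 (h ▸ hb), hbc, hcd, hda⟩


set_option maxHeartbeats 1000000 in
theorem stmt18 {V : Type*} [Fintype V] [DecidableEq V] (G : SimpleGraph V) [DecidableRel G.Adj]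
    (M : ℕ) (hM : 12 ≤ M)
    (v v₁ v₂ x' : V) (hne : v₁ ≠ v₂) (hvx : v ≠ x')
    (h1 : G.Adj v v₁) (h2 : G.Adj v v₂)
    (h3 : G.Adj v₁ x') (h4 : G.Adj v₂ x')
    (hd1 : G.degree v₁ = 2) (hd2 : G.degree v₂ = 2)
    (hdv : G.degree v ≤ M)
    (hH : HasDTotalLabelling (G.induce ({v₁, v₂}ᶜ : Set V)) 2 (M + 2))
    (hdvH : (G.neighborSet v \ {v₁, v₂}).ncard ≤ M - 2)
    (hdxH : (G.neighborSet x' \ {v₁, v₂}).ncard ≤ M - 2) :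
    HasDTotalLabelling G 2 (M + 2) := by
  classical
  set S : Set V := ({v₁, v₂}ᶜ : Set V) with hS
  obtain ⟨cv, ce, hcv, hce, hadj, hed, hinc⟩ := hH
  have nvv1 : v ≠ v₁ := h1.ne
  have nvv2 : v ≠ v₂ := h2.ne
  have nv1x : v₁ ≠ x' := h3.ne
  have nv2x : v₂ ≠ x' := h4.ne
  have hmemS : ∀ {u : V}, u ≠ v₁ → u ≠ v₂ → u ∈ S := by
    intro u hu1 hu2; simp [hS, hu1, hu2]
  have hS1 : ∀ {u : V}, u ∈ S → u ≠ v₁ := by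
    intro u hu h; rw [h] at hu; simp [hS] at hu
  have hS2 : ∀ {u : V}, u ∈ S → u ≠ v₂ := by
    intro u hu h; rw [h] at hu; simp [hS] at hu
  have hvS : v ∈ S := hmemS nvv1 nvv2
  have hxS : x' ∈ S := hmemS (Ne.symm nv1x) (Ne.symm nv2x)
  -- extended old vertex colors
  set g : V → ℕ := fun u => if h : u ∈ S then cv ⟨u, h⟩ else 0 with hg
  have hgS : ∀ (u : V) (hu : u ∈ S), g u = cv ⟨u, hu⟩ := by
    intro u hu; simp [hg, dif_pos hu]
  -- extended old edge colors
  set F : Sym2 V → ℕ :=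
    fun e => if h : ∃ e' : Sym2 S, Sym2.map Subtype.val e' = e then ce h.choose else 0 with hF
  have hFmap : ∀ e' : Sym2 S, F (Sym2.map Subtype.val e') = ce e' := by
    intro e'
    have hex : ∃ e'' : Sym2 S, Sym2.map Subtype.val e'' = Sym2.map Subtype.val e' := ⟨e', rfl⟩
    simp only [hF, dif_pos hex]
    congr 1
    exact Sym2.map.injective Subtype.val_injective hex.choose_spec
  have hmemlift : ∀ (eh : Sym2 S) (w : V) (hws : w ∈ S),
      w ∈ Sym2.map Subtype.val eh → (⟨w, hws⟩ : S) ∈ eh := by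
    intro eh w hws hw
    obtain ⟨y, hy, hyw⟩ := Sym2.mem_map.mp hw
    exact (Subtype.ext hyw : y = ⟨w, hws⟩) ▸ hy
  -- neighbors of v₁ and v₂
  have key1 : ∀ u, G.Adj v₁ u → u = v ∨ u = x' := by
    intro u hu
    have hsub : ({v, x'} : Finset V) ⊆ G.neighborFinset v₁ := by
      intro w hw
      rw [SimpleGraph.mem_neighborFinset]
      rcases Finset.mem_insert.mp hw with rfl | hw
      · exact h1.symm
      · rw [Finset.mem_singleton] at hw; rw [hw]; exact h3
    have hcard : (G.neighborFinset v₁).card ≤ ({v, x'} : Finset V).card := by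
      rw [SimpleGraph.card_neighborFinset_eq_degree, hd1,
        Finset.card_insert_of_notMem (by simpa using hvx), Finset.card_singleton]
    have heq := Finset.eq_of_subset_of_card_le hsub hcard
    have : u ∈ ({v, x'} : Finset V) := by
      rw [heq, SimpleGraph.mem_neighborFinset]; exact hu
    simpa using this
  have key2 : ∀ u, G.Adj v₂ u → u = v ∨ u = x' := by
    intro u hu
    have hsub : ({v, x'} : Finset V) ⊆ G.neighborFinset v₂ := by
      intro w hw
      rw [SimpleGraph.mem_neighborFinset]
      rcases Finset.mem_insert.mp hw with rfl | hw
      · exact h2.symm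
      · rw [Finset.mem_singleton] at hw; rw [hw]; exact h4
    have hcard : (G.neighborFinset v₂).card ≤ ({v, x'} : Finset V).card := by
      rw [SimpleGraph.card_neighborFinset_eq_degree, hd2,
        Finset.card_insert_of_notMem (by simpa using hvx), Finset.card_singleton]
    have heq := Finset.eq_of_subset_of_card_le hsub hcard
    have : u ∈ ({v, x'} : Finset V) := by
      rw [heq, SimpleGraph.mem_neighborFinset]; exact hu
    simpa using this
  have hE1 : ∀ e ∈ G.edgeSet, v₁ ∈ e → e = s(v, v₁) ∨ e = s(v₁, x') := by
    intro e he hm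
    induction e with
    | h a b =>
      rw [SimpleGraph.mem_edgeSet] at he
      rcases Sym2.mem_iff.mp hm with rfl | rfl
      · rcases key1 b he with rfl | rfl
        · exact Or.inl (Sym2.eq_swap)
        · exact Or.inr rfl
      · rcases key1 a he.symm with rfl | rfl
        · exact Or.inl rfl
        · exact Or.inr (Sym2.eq_swap)
  have hE2 : ∀ e ∈ G.edgeSet, v₂ ∈ e → e = s(v, v₂) ∨ e = s(v₂, x') := by
    intro e he hm
    induction e with
    | h a b =>
      rw [SimpleGraph.mem_edgeSet] at he
      rcases Sym2.mem_iff.mp hm with rfl | rfl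
      · rcases key2 b he with rfl | rfl
        · exact Or.inl (Sym2.eq_swap)
        · exact Or.inr rfl
      · rcases key2 a he.symm with rfl | rfl
        · exact Or.inl rfl
        · exact Or.inr (Sym2.eq_swap)
  -- lifting old edges
  have hold : ∀ e ∈ G.edgeSet, v₁ ∉ e → v₂ ∉ e →
      ∃ eh : Sym2 S, Sym2.map Subtype.val eh = e ∧ eh ∈ (G.induce S).edgeSet := by
    intro e he hm1 hm2
    induction e with
    | h a b =>
      have haS : a ∈ S := hmemS (fun h => hm1 (h ▸ Sym2.mem_mk_left a b))
        (fun h => hm2 (h ▸ Sym2.mem_mk_left a b))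
      have hbS : b ∈ S := hmemS (fun h => hm1 (h ▸ Sym2.mem_mk_right a b))
        (fun h => hm2 (h ▸ Sym2.mem_mk_right a b))
      refine ⟨s(⟨a, haS⟩, ⟨b, hbS⟩), by simp, ?_⟩
      rw [SimpleGraph.mem_edgeSet] at he ⊢
      simpa using he
  -- distinctness of the four new edges
  have dAB : s(v, v₁) ≠ s(v₁, x') := by
    intro h; rw [Sym2.eq_iff] at h
    rcases h with ⟨h, h'⟩ | ⟨h, h'⟩ <;> simp_all
  have dAC : s(v, v₁) ≠ s(v₂, x') := by
    intro h; rw [Sym2.eq_iff] at h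
    rcases h with ⟨h, h'⟩ | ⟨h, h'⟩ <;> simp_all
  have dAD : s(v, v₁) ≠ s(v, v₂) := by
    intro h; rw [Sym2.eq_iff] at h
    rcases h with ⟨h, h'⟩ | ⟨h, h'⟩ <;> simp_all
  have dBC : s(v₁, x') ≠ s(v₂, x') := by
    intro h; rw [Sym2.eq_iff] at h
    rcases h with ⟨h, h'⟩ | ⟨h, h'⟩ <;> simp_all
  have dBD : s(v₁, x') ≠ s(v, v₂) := by
    intro h; rw [Sym2.eq_iff] at h
    rcases h with ⟨h, h'⟩ | ⟨h, h'⟩ <;> simp_all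
  have dCD : s(v₂, x') ≠ s(v, v₂) := by
    intro h; rw [Sym2.eq_iff] at h
    rcases h with ⟨h, h'⟩ | ⟨h, h'⟩ <;> simp_all
  -- classification of edges
  have hclass : ∀ e ∈ G.edgeSet,
      (e = s(v, v₁) ∨ e = s(v₁, x') ∨ e = s(v₂, x') ∨ e = s(v, v₂)) ∨ (v₁ ∉ e ∧ v₂ ∉ e) := by
    intro e he
    by_cases hm1 : v₁ ∈ e
    · rcases hE1 e he hm1 with h | h
      · exact Or.inl (Or.inl h)
      · exact Or.inl (Or.inr (Or.inl h))
    · by_cases hm2 : v₂ ∈ e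
      · rcases hE2 e he hm2 with h | h
        · exact Or.inl (Or.inr (Or.inr (Or.inr h)))
        · exact Or.inl (Or.inr (Or.inr (Or.inl h)))
      · exact Or.inr ⟨hm1, hm2⟩
  -- sets of colors of old edges at v and x'
  set Ev : Finset (Sym2 V) := (G.incidenceFinset v).filter (fun e => v₁ ∉ e ∧ v₂ ∉ e) with hEvdef
  set Ex : Finset (Sym2 V) := (G.incidenceFinset x').filter (fun e => v₁ ∉ e ∧ v₂ ∉ e) with hExdef
  have hpairsub : ({s(v, v₁), s(v, v₂)} : Finset (Sym2 V)) ⊆ G.incidenceFinset v := by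
    intro e he
    rcases Finset.mem_insert.mp he with rfl | he
    · rw [SimpleGraph.mem_incidenceFinset]
      exact ⟨h1, Sym2.mem_mk_left _ _⟩
    · rw [Finset.mem_singleton] at he; subst he
      rw [SimpleGraph.mem_incidenceFinset]
      exact ⟨h2, Sym2.mem_mk_left _ _⟩
  have hpaircard : ({s(v, v₁), s(v, v₂)} : Finset (Sym2 V)).card = 2 := by
    rw [Finset.card_insert_of_notMem (by simpa using dAD), Finset.card_singleton]
  have hEvcard : Ev.card ≤ M - 2 := by
    have hEvsub : Ev ⊆ G.incidenceFinset v \ {s(v, v₁), s(v, v₂)} := by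
      intro e he
      rw [hEvdef, Finset.mem_filter] at he
      rw [Finset.mem_sdiff]
      refine ⟨he.1, ?_⟩
      simp only [Finset.mem_insert, Finset.mem_singleton]
      push_neg
      exact ⟨fun h => he.2.1 (by rw [h]; exact Sym2.mem_mk_right _ _),
        fun h => he.2.2 (by rw [h]; exact Sym2.mem_mk_right _ _)⟩
    calc Ev.card ≤ (G.incidenceFinset v \ {s(v, v₁), s(v, v₂)}).card :=
          Finset.card_le_card hEvsub
      _ = (G.incidenceFinset v).card - 2 := by rw [Finset.card_sdiff_of_subset hpairsub, hpaircard]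
      _ ≤ M - 2 := by
          rw [SimpleGraph.card_incidenceFinset_eq_degree]
          omega
  have hExcard : Ex.card ≤ M - 2 := by
    have hExsub : Ex ⊆ (G.neighborFinset x' \ {v₁, v₂}).image (fun w => s(x', w)) := by
      intro e he
      rw [hExdef, Finset.mem_filter] at he
      obtain ⟨hei, hm1, hm2⟩ := he
      rw [SimpleGraph.mem_incidenceFinset] at hei
      obtain ⟨heE, hxm⟩ := hei
      have hsp := Sym2.other_spec' hxm
      refine Finset.mem_image.mpr ⟨Sym2.Mem.other' hxm, ?_, hsp⟩
      rw [Finset.mem_sdiff, SimpleGraph.mem_neighborFinset]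
      constructor
      · rw [← hsp] at heE; exact heE
      · simp only [Finset.mem_insert, Finset.mem_singleton]
        push_neg
        exact ⟨fun h => hm1 (h ▸ Sym2.other_mem' hxm), fun h => hm2 (h ▸ Sym2.other_mem' hxm)⟩
    have hnbx : (G.neighborFinset x' \ {v₁, v₂}).card ≤ M - 2 := by
      have hset : (G.neighborSet x' \ {v₁, v₂} : Set V)
          = ↑(G.neighborFinset x' \ ({v₁, v₂} : Finset V)) := by
        ext w
        simp [SimpleGraph.mem_neighborFinset]
      rw [hset, Set.ncard_coe_finset] at hdxH
      exact hdxH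
    exact le_trans (le_trans (Finset.card_le_card hExsub) Finset.card_image_le) hnbx
  -- available color lists for the four new edges
  have hIcc : ∀ t : ℕ, (Finset.Icc (t - 1) (t + 1)).card ≤ 3 := by
    intro t; rw [Nat.card_Icc]; omega
  set Lv : Finset ℕ :=
    Finset.range (M + 3) \ (Ev.image F ∪ Finset.Icc (g v - 1) (g v + 1)) with hLvdef
  set Lx : Finset ℕ :=
    Finset.range (M + 3) \ (Ex.image F ∪ Finset.Icc (g x' - 1) (g x' + 1)) with hLxdef
  have hLvcard : 2 ≤ Lv.card := by
    rw [hLvdef]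
    have h1' := Finset.le_card_sdiff (Ev.image F ∪ Finset.Icc (g v - 1) (g v + 1))
      (Finset.range (M + 3))
    have h2' := Finset.card_union_le (Ev.image F) (Finset.Icc (g v - 1) (g v + 1))
    have h3' := Finset.card_image_le (s := Ev) (f := F)
    have h4' := hIcc (g v)
    rw [Finset.card_range] at h1'
    omega
  have hLxcard : 2 ≤ Lx.card := by
    rw [hLxdef]
    have h1' := Finset.le_card_sdiff (Ex.image F ∪ Finset.Icc (g x' - 1) (g x' + 1))
      (Finset.range (M + 3))
    have h2' := Finset.card_union_le (Ex.image F) (Finset.Icc (g x' - 1) (g x' + 1))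
    have h3' := Finset.card_image_le (s := Ex) (f := F)
    have h4' := hIcc (g x')
    rw [Finset.card_range] at h1'
    omega
  obtain ⟨ca, cb, cc, cd, hca, hcb, hcc, hcd, hab, hbc, hcd2, hda⟩ :=
    c4_choose Lv Lx Lx Lv hLvcard hLxcard hLxcard hLvcard
  have hLvprop : ∀ {c : ℕ}, c ∈ Lv →
      c < M + 3 ∧ (∀ e ∈ Ev, F e ≠ c) ∧ c ∉ Finset.Icc (g v - 1) (g v + 1) := by
    intro c hc
    rw [hLvdef, Finset.mem_sdiff, Finset.mem_union, Finset.mem_range] at hc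
    push_neg at hc
    refine ⟨hc.1, ?_, hc.2.2⟩
    intro e he hFe
    exact hc.2.1 (Finset.mem_image.mpr ⟨e, he, hFe⟩)
  have hLxprop : ∀ {c : ℕ}, c ∈ Lx →
      c < M + 3 ∧ (∀ e ∈ Ex, F e ≠ c) ∧ c ∉ Finset.Icc (g x' - 1) (g x' + 1) := by
    intro c hc
    rw [hLxdef, Finset.mem_sdiff, Finset.mem_union, Finset.mem_range] at hc
    push_neg at hc
    refine ⟨hc.1, ?_, hc.2.2⟩
    intro e he hFe
    exact hc.2.1 (Finset.mem_image.mpr ⟨e, he, hFe⟩)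
  -- choose colors for v₁ and v₂
  have hchoosev : ∀ p q : ℕ, ∃ a, a < M + 3 ∧ a ≠ g v ∧ a ≠ g x' ∧
      a ∉ Finset.Icc (p - 1) (p + 1) ∧ a ∉ Finset.Icc (q - 1) (q + 1) := by
    intro p q
    set B : Finset ℕ := Finset.range (M + 3) \
      (({g v, g x'} : Finset ℕ) ∪ Finset.Icc (p - 1) (p + 1) ∪ Finset.Icc (q - 1) (q + 1))
      with hBdef
    have hBne : B.Nonempty := by
      rw [← Finset.card_pos, hBdef]
      have h1' := Finset.le_card_sdiff
        (({g v, g x'} : Finset ℕ) ∪ Finset.Icc (p - 1) (p + 1) ∪ Finset.Icc (q - 1) (q + 1))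
        (Finset.range (M + 3))
      have h2' := Finset.card_union_le
        (({g v, g x'} : Finset ℕ) ∪ Finset.Icc (p - 1) (p + 1)) (Finset.Icc (q - 1) (q + 1))
      have h3' := Finset.card_union_le (({g v, g x'} : Finset ℕ)) (Finset.Icc (p - 1) (p + 1))
      have h4' : ({g v, g x'} : Finset ℕ).card ≤ 2 := (Finset.card_insert_le _ _).trans (by simp)
      have h5' := hIcc p
      have h6' := hIcc q
      rw [Finset.card_range] at h1'
      omega
    obtain ⟨a, ha⟩ := hBne
    rw [hBdef, Finset.mem_sdiff, Finset.mem_range] at ha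
    obtain ⟨halt, han⟩ := ha
    simp only [Finset.mem_union, Finset.mem_insert, Finset.mem_singleton, not_or] at han
    exact ⟨a, halt, han.1.1.1, han.1.1.2, han.1.2, han.2⟩
  obtain ⟨a₁, ha₁lt, ha₁v, ha₁x, ha₁ca, ha₁cb⟩ := hchoosev ca cb
  obtain ⟨a₂, ha₂lt, ha₂v, ha₂x, ha₂cc, ha₂cd⟩ := hchoosev cc cd
  -- the new labelling
  set cV : V → ℕ := fun u => if u = v₁ then a₁ else if u = v₂ then a₂ else g u with hcVdef
  set cE : Sym2 V → ℕ := fun e =>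
    if e = s(v, v₁) then ca else if e = s(v₁, x') then cb
    else if e = s(v₂, x') then cc else if e = s(v, v₂) then cd else F e with hcEdef
  have hcV1 : cV v₁ = a₁ := by simp [hcVdef]
  have hcV2 : cV v₂ = a₂ := by simp [hcVdef, Ne.symm hne]
  have hcVold : ∀ (u : V), u ≠ v₁ → u ≠ v₂ → cV u = g u := by
    intro u hu1 hu2; simp [hcVdef, hu1, hu2]
  have hceA : cE s(v, v₁) = ca := by simp [hcEdef]
  have hceB : cE s(v₁, x') = cb := by
    simp [hcEdef, Ne.symm dAB]
  have hceC : cE s(v₂, x') = cc := by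
    simp [hcEdef, Ne.symm dAC, Ne.symm dBC]
  have hceD : cE s(v, v₂) = cd := by
    simp [hcEdef, Ne.symm dAD, Ne.symm dBD, Ne.symm dCD]
  have hceold : ∀ e : Sym2 V, v₁ ∉ e → v₂ ∉ e → cE e = F e := by
    intro e hm1 hm2
    have n1 : e ≠ s(v, v₁) := fun h => hm1 (by rw [h]; exact Sym2.mem_mk_right _ _)
    have n2 : e ≠ s(v₁, x') := fun h => hm1 (by rw [h]; exact Sym2.mem_mk_left _ _)
    have n3 : e ≠ s(v₂, x') := fun h => hm2 (by rw [h]; exact Sym2.mem_mk_left _ _)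
    have n4 : e ≠ s(v, v₂) := fun h => hm2 (by rw [h]; exact Sym2.mem_mk_right _ _)
    simp [hcEdef, n1, n2, n3, n4]
  have hgbound : ∀ u : V, g u ≤ M + 2 := by
    intro u
    by_cases h : u ∈ S
    · rw [hgS u h]; exact hcv _
    · simp [hg, h]
  have hv_old : ∀ e' ∈ G.edgeSet, v₁ ∉ e' → v₂ ∉ e' → v ∈ e' →
      ∀ {c : ℕ}, c ∈ Lv → c ≠ cE e' := by
    intro e' he' hm1 hm2 hv' c hc
    have hmem : e' ∈ Ev := by
      rw [hEvdef, Finset.mem_filter, SimpleGraph.mem_incidenceFinset]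
      exact ⟨⟨he', hv'⟩, hm1, hm2⟩
    rw [hceold e' hm1 hm2]
    exact fun h => (hLvprop hc).2.1 e' hmem h.symm
  have hx_old : ∀ e' ∈ G.edgeSet, v₁ ∉ e' → v₂ ∉ e' → x' ∈ e' →
      ∀ {c : ℕ}, c ∈ Lx → c ≠ cE e' := by
    intro e' he' hm1 hm2 hx2 c hc
    have hmem : e' ∈ Ex := by
      rw [hExdef, Finset.mem_filter, SimpleGraph.mem_incidenceFinset]
      exact ⟨⟨he', hx2⟩, hm1, hm2⟩
    rw [hceold e' hm1 hm2]
    exact fun h => (hLxprop hc).2.1 e' hmem h.symm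
  have hno : ∀ e ∈ G.edgeSet, ∀ e' ∈ G.edgeSet,
      (e = s(v, v₁) ∨ e = s(v₁, x') ∨ e = s(v₂, x') ∨ e = s(v, v₂)) →
      v₁ ∉ e' → v₂ ∉ e' → (∃ w, w ∈ e ∧ w ∈ e') → cE e ≠ cE e' := by
    intro e he e' he' hnew hm1' hm2' hsh
    obtain ⟨w, hw, hw'⟩ := hsh
    have hwn1 : w ≠ v₁ := fun h => hm1' (h ▸ hw')
    have hwn2 : w ≠ v₂ := fun h => hm2' (h ▸ hw')
    rcases hnew with rfl | rfl | rfl | rfl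
    · have hwv : w = v := by
        rcases Sym2.mem_iff.mp hw with h | h
        · exact h
        · exact absurd h hwn1
      rw [hceA]
      exact hv_old e' he' hm1' hm2' (hwv ▸ hw') hca
    · have hwv : w = x' := by
        rcases Sym2.mem_iff.mp hw with h | h
        · exact absurd h hwn1
        · exact h
      rw [hceB]
      exact hx_old e' he' hm1' hm2' (hwv ▸ hw') hcb
    · have hwv : w = x' := by
        rcases Sym2.mem_iff.mp hw with h | h
        · exact absurd h hwn2
        · exact h
      rw [hceC]
      exact hx_old e' he' hm1' hm2' (hwv ▸ hw') hcc
    · have hwv : w = v := by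
        rcases Sym2.mem_iff.mp hw with h | h
        · exact h
        · exact absurd h hwn2
      rw [hceD]
      exact hv_old e' he' hm1' hm2' (hwv ▸ hw') hcd
  refine ⟨cV, cE, ?_, ?_, ?_, ?_, ?_⟩
  · -- vertex colors bounded
    intro u
    by_cases hu1 : u = v₁
    · subst hu1; rw [hcV1]; omega
    by_cases hu2 : u = v₂
    · subst hu2; rw [hcV2]; omega
    rw [hcVold u hu1 hu2]; exact hgbound u
  · -- edge colors bounded
    intro e he
    rcases hclass e he with (rfl | rfl | rfl | rfl) | ⟨hm1, hm2⟩
    · rw [hceA]; have := (hLvprop hca).1; omega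
    · rw [hceB]; have := (hLxprop hcb).1; omega
    · rw [hceC]; have := (hLxprop hcc).1; omega
    · rw [hceD]; have := (hLvprop hcd).1; omega
    · obtain ⟨eh, hehm, hehE⟩ := hold e he hm1 hm2
      rw [hceold e hm1 hm2, ← hehm, hFmap]
      exact hce _ hehE
  · -- adjacent vertices distinct
    intro u w huw
    by_cases hu1 : u = v₁
    · subst hu1
      rw [hcV1]
      rcases key1 w huw with h | h
      · rw [h, hcVold v nvv1 nvv2]; exact ha₁v
      · rw [h, hcVold x' (Ne.symm nv1x) (Ne.symm nv2x)]; exact ha₁x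
    by_cases hu2 : u = v₂
    · subst hu2
      rw [hcV2]
      rcases key2 w huw with h | h
      · rw [h, hcVold v nvv1 nvv2]; exact ha₂v
      · rw [h, hcVold x' (Ne.symm nv1x) (Ne.symm nv2x)]; exact ha₂x
    by_cases hw1 : w = v₁
    · subst hw1
      rw [hcV1]
      rcases key1 u huw.symm with h | h
      · rw [h, hcVold v nvv1 nvv2]; exact Ne.symm ha₁v
      · rw [h, hcVold x' (Ne.symm nv1x) (Ne.symm nv2x)]; exact Ne.symm ha₁x
    by_cases hw2 : w = v₂
    · subst hw2
      rw [hcV2]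
      rcases key2 u huw.symm with h | h
      · rw [h, hcVold v nvv1 nvv2]; exact Ne.symm ha₂v
      · rw [h, hcVold x' (Ne.symm nv1x) (Ne.symm nv2x)]; exact Ne.symm ha₂x
    · have huS : u ∈ S := hmemS hu1 hu2
      have hwS : w ∈ S := hmemS hw1 hw2
      rw [hcVold u hu1 hu2, hcVold w hw1 hw2, hgS u huS, hgS w hwS]
      exact hadj ⟨u, huS⟩ ⟨w, hwS⟩ huw
  · -- adjacent edges distinct
    intro e he e' he' hnee hshare
    rcases hclass e he with hnew | ⟨hm1, hm2⟩
    · rcases hclass e' he' with hnew' | ⟨hm1', hm2'⟩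
      · obtain ⟨w, hw, hw'⟩ := hshare
        rcases hnew with rfl | rfl | rfl | rfl <;> rcases hnew' with rfl | rfl | rfl | rfl <;>
          simp only [hceA, hceB, hceC, hceD]
        · exact absurd rfl hnee
        · exact hab
        · rcases Sym2.mem_iff.mp hw with h | h <;>
            rcases Sym2.mem_iff.mp hw' with h' | h' <;> rw [h] at h' <;>
            first
              | exact absurd h' nvv2 | exact absurd h' hvx | exact absurd h' hne
              | exact absurd h' nv1x | exact absurd h' nv2x | exact absurd h' nvv1
              | exact absurd h' (Ne.symm nvv2) | exact absurd h' (Ne.symm hvx)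
              | exact absurd h' (Ne.symm hne) | exact absurd h' (Ne.symm nv1x)
              | exact absurd h' (Ne.symm nv2x) | exact absurd h' (Ne.symm nvv1)
        · exact Ne.symm hda
        · exact Ne.symm hab
        · exact absurd rfl hnee
        · exact hbc
        · rcases Sym2.mem_iff.mp hw with h | h <;>
            rcases Sym2.mem_iff.mp hw' with h' | h' <;> rw [h] at h' <;>
            first
              | exact absurd h' nvv2 | exact absurd h' hvx | exact absurd h' hne
              | exact absurd h' nv1x | exact absurd h' nv2x | exact absurd h' nvv1
              | exact absurd h' (Ne.symm nvv2) | exact absurd h' (Ne.symm hvx)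
              | exact absurd h' (Ne.symm hne) | exact absurd h' (Ne.symm nv1x)
              | exact absurd h' (Ne.symm nv2x) | exact absurd h' (Ne.symm nvv1)
        · rcases Sym2.mem_iff.mp hw with h | h <;>
            rcases Sym2.mem_iff.mp hw' with h' | h' <;> rw [h] at h' <;>
            first
              | exact absurd h' nvv2 | exact absurd h' hvx | exact absurd h' hne
              | exact absurd h' nv1x | exact absurd h' nv2x | exact absurd h' nvv1
              | exact absurd h' (Ne.symm nvv2) | exact absurd h' (Ne.symm hvx)
              | exact absurd h' (Ne.symm hne) | exact absurd h' (Ne.symm nv1x)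
              | exact absurd h' (Ne.symm nv2x) | exact absurd h' (Ne.symm nvv1)
        · exact Ne.symm hbc
        · exact absurd rfl hnee
        · exact hcd2
        · exact hda
        · rcases Sym2.mem_iff.mp hw with h | h <;>
            rcases Sym2.mem_iff.mp hw' with h' | h' <;> rw [h] at h' <;>
            first
              | exact absurd h' nvv2 | exact absurd h' hvx | exact absurd h' hne
              | exact absurd h' nv1x | exact absurd h' nv2x | exact absurd h' nvv1
              | exact absurd h' (Ne.symm nvv2) | exact absurd h' (Ne.symm hvx)
              | exact absurd h' (Ne.symm hne) | exact absurd h' (Ne.symm nv1x)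
              | exact absurd h' (Ne.symm nv2x) | exact absurd h' (Ne.symm nvv1)
        · exact Ne.symm hcd2
        · exact absurd rfl hnee
      · exact hno e he e' he' hnew hm1' hm2' hshare
    · rcases hclass e' he' with hnew' | ⟨hm1', hm2'⟩
      · obtain ⟨w, hw, hw'⟩ := hshare
        exact Ne.symm (hno e' he' e he hnew' hm1 hm2 ⟨w, hw', hw⟩)
      · obtain ⟨eh, hehm, hehE⟩ := hold e he hm1 hm2
        obtain ⟨eh', hehm', hehE'⟩ := hold e' he' hm1' hm2'
        rw [hceold e hm1 hm2, hceold e' hm1' hm2', ← hehm, ← hehm', hFmap, hFmap]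
        apply hed _ hehE _ hehE'
        · intro h; exact hnee (by rw [← hehm, ← hehm', h])
        · obtain ⟨w, hw, hw'⟩ := hshare
          have hwS : w ∈ S := hmemS (fun h => hm1 (h ▸ hw)) (fun h => hm2 (h ▸ hw))
          exact ⟨⟨w, hwS⟩, hmemlift _ _ _ (by rw [hehm]; exact hw),
            hmemlift _ _ _ (by rw [hehm']; exact hw')⟩
  · -- vertex-edge gap
    intro u e he hu
    rcases hclass e he with (rfl | rfl | rfl | rfl) | ⟨hm1, hm2⟩
    · rw [hceA]
      rcases Sym2.mem_iff.mp hu with h | h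
      · rw [h, hcVold v nvv1 nvv2]
        have hgap := gap_of_notMem (hLvprop hca).2.2
        rw [abs_sub_comm] at hgap
        exact_mod_cast hgap
      · rw [h, hcV1]
        exact_mod_cast gap_of_notMem ha₁ca
    · rw [hceB]
      rcases Sym2.mem_iff.mp hu with h | h
      · rw [h, hcV1]
        exact_mod_cast gap_of_notMem ha₁cb
      · rw [h, hcVold x' (Ne.symm nv1x) (Ne.symm nv2x)]
        have hgap := gap_of_notMem (hLxprop hcb).2.2
        rw [abs_sub_comm] at hgap
        exact_mod_cast hgap
    · rw [hceC]
      rcases Sym2.mem_iff.mp hu with h | h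
      · rw [h, hcV2]
        exact_mod_cast gap_of_notMem ha₂cc
      · rw [h, hcVold x' (Ne.symm nv1x) (Ne.symm nv2x)]
        have hgap := gap_of_notMem (hLxprop hcc).2.2
        rw [abs_sub_comm] at hgap
        exact_mod_cast hgap
    · rw [hceD]
      rcases Sym2.mem_iff.mp hu with h | h
      · rw [h, hcVold v nvv1 nvv2]
        have hgap := gap_of_notMem (hLvprop hcd).2.2
        rw [abs_sub_comm] at hgap
        exact_mod_cast hgap
      · rw [h, hcV2]
        exact_mod_cast gap_of_notMem ha₂cd
    · obtain ⟨eh, hehm, hehE⟩ := hold e he hm1 hm2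
      have hun1 : u ≠ v₁ := fun h => hm1 (h ▸ hu)
      have hun2 : u ≠ v₂ := fun h => hm2 (h ▸ hu)
      have huS : u ∈ S := hmemS hun1 hun2
      rw [hceold e hm1 hm2, ← hehm, hFmap, hcVold u hun1 hun2, hgS u huS]
      exact hinc ⟨u, huS⟩ eh hehE (hmemlift _ _ _ (by rw [hehm]; exact hu))
end
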